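/- arXiv:1805.09941 — 10 statements merged into one kernel-verified Lean document; each statement's English description precedes it below -/
import Mathlib

section
/- Let p ≥ 3 be a prime, s ≥ 1 an integer, and B = pA + I a 2×2 integer matrix where the (i₀)-th entry of A (for some fixed position 1 ≤ i₀ ≤ 4) is not divisible by p. Then B^(p^(s−1)) = p^s·C + I for some 2×2 integer matrix C with C ≡ A (mod p) entrywise. -/
private lemma pcast_mul_dvd {R : Type*} [Ring R] (p : ℕ) {a b : R} {n n' : ℕ}
    (ha : (p : R) ^ n ∣ a) (hb : (p : R) ^ n' ∣ b) : (p : R) ^ (n + n') ∣ a * b := by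
  obtain ⟨c, rfl⟩ := ha
  obtain ⟨d, rfl⟩ := hb
  refine ⟨c * d, ?_⟩
  calc (p : R) ^ n * c * ((p : R) ^ n' * d)
      = (p : R) ^ n * ((c * (p : R) ^ n') * d) := by rw [mul_assoc, mul_assoc]
    _ = (p : R) ^ n * (((p : R) ^ n' * c) * d) := by
        rw [((Nat.cast_commute p c).pow_left n').eq]
    _ = (p : R) ^ (n + n') * (c * d) := by rw [pow_add, mul_assoc, mul_assoc]

private lemma key_step {R : Type*} [Ring R] (p : ℕ) (hp : p.Prime) (hp3 : 3 ≤ p)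
    (k : ℕ) (hk : 1 ≤ k) (M : R) :
    ∃ D : R, ((p : R) ^ k * M + 1) ^ p = (p : R) ^ (k + 1) * (M + (p : R) * D) + 1 := by
  set x : R := (p : R) ^ k * M with hx
  have hxp : ∀ n, x ^ n = (p : R) ^ (k * n) * M ^ n := by
    intro n
    rw [hx, ((Nat.cast_commute p M).pow_left k).mul_pow, ← pow_mul]
  have hpow := (Commute.one_right x).add_pow p
  simp only [one_pow, mul_one] at hpow
  rw [Finset.sum_range_succ'] at hpow
  rw [show Finset.range p = Finset.range ((p - 1) + 1) by
    rw [Nat.sub_add_cancel (by omega)]] at hpow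
  rw [Finset.sum_range_succ'] at hpow
  simp only [Nat.zero_add, pow_zero, one_mul, pow_one, Nat.choose_zero_right,
    Nat.choose_one_right, Nat.cast_one, mul_one] at hpow
  -- the remaining sum is divisible by p^(k+2)
  have hdvd : (p : R) ^ (k + 2) ∣
      ∑ m ∈ Finset.range (p - 1), x ^ (m + 1 + 1) * (p.choose (m + 1 + 1) : R) := by
    refine Finset.dvd_sum fun m hm => ?_
    have hm' : m < p - 1 := Finset.mem_range.mp hm
    by_cases hmp : m + 1 + 1 = p
    · rw [hxp]
      have hle : k + 2 ≤ k * (m + 1 + 1) := by nlinarith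
      exact ((pow_dvd_pow (p : R) hle).mul_right _).mul_right _
    · have hch : p ∣ p.choose (m + 1 + 1) := hp.dvd_choose_self (by omega) (by omega)
      have hch' : (p : R) ^ 1 ∣ (p.choose (m + 1 + 1) : R) := by
        obtain ⟨t, ht⟩ := hch
        exact ⟨(t : R), by rw [pow_one, ht, Nat.cast_mul]⟩
      have hxd : (p : R) ^ (k + 1) ∣ x ^ (m + 1 + 1) := by
        rw [hxp]
        refine (pow_dvd_pow (p : R) ?_).mul_right _
        nlinarith
      exact pcast_mul_dvd p (n := k + 1) (n' := 1) hxd hch'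
  obtain ⟨D, hD⟩ := hdvd
  refine ⟨D, ?_⟩
  have hc : x * (p : R) = (p : R) ^ (k + 1) * M := by
    rw [hx, mul_assoc, ((Nat.cast_commute p M).symm).eq, ← mul_assoc, ← pow_succ]
  rw [hpow, hD, hc, mul_add, ← mul_assoc, ← pow_succ]
  rw [show k + 1 + 1 = k + 2 from rfl]
  abel

private lemma key_iter {R : Type*} [Ring R] (p : ℕ) (hp : p.Prime) (hp3 : 3 ≤ p)
    (M : R) : ∀ s : ℕ, 1 ≤ s →
    ∃ E : R, ((p : R) * M + 1) ^ (p ^ (s - 1)) = (p : R) ^ s * (M + (p : R) * E) + 1 := by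
  intro s hs
  induction s with
  | zero => omega
  | succ n ih =>
    rcases Nat.eq_or_lt_of_le hs with h1 | h1
    · refine ⟨0, ?_⟩
      have : n = 0 := by omega
      subst this
      simp
    · have hn : 1 ≤ n := by omega
      obtain ⟨E, hE⟩ := ih hn
      obtain ⟨D, hD⟩ := key_step p hp hp3 n hn (M + (p : R) * E)
      refine ⟨E + D, ?_⟩
      have hexp : p ^ (n + 1 - 1) = p ^ (n - 1) * p := by
        rw [Nat.add_sub_cancel, ← pow_succ]
        congr 1
        omega
      rw [hexp, pow_mul, hE, hD]
      congr 2
      rw [mul_add, add_assoc]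

theorem pow_p_pow_s_sub_one_entry_congr
    (p : ℕ) (hp : p.Prime) (hp3 : 3 ≤ p) (s : ℕ) (hs : 1 ≤ s)
    (A : Matrix (Fin 2) (Fin 2) ℤ) (i₀ j₀ : Fin 2)
    (hA : ¬ (p : ℤ) ∣ A i₀ j₀) :
    ∃ C : Matrix (Fin 2) (Fin 2) ℤ,
      ((p : ℤ) • A + 1) ^ (p ^ (s - 1)) = ((p : ℤ) ^ s) • C + 1 ∧
      ∀ i j : Fin 2, (p : ℤ) ∣ (C i j - A i j) := by
  obtain ⟨E, hE⟩ := key_iter (R := Matrix (Fin 2) (Fin 2) ℤ) p hp hp3 A s hs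
  refine ⟨A + (p : Matrix (Fin 2) (Fin 2) ℤ) * E, ?_, ?_⟩
  · rw [zsmul_eq_mul, zsmul_eq_mul]
    push_cast
    exact hE
  · intro i j
    have h1 : ((p : Matrix (Fin 2) (Fin 2) ℤ) * E) i j = (p : ℤ) * E i j := by
      rw [← nsmul_eq_mul]
      simp [Matrix.smul_apply, nsmul_eq_mul]
    have : (A + (p : Matrix (Fin 2) (Fin 2) ℤ) * E) i j - A i j = (p : ℤ) * E i j := by
      rw [Matrix.add_apply, h1]
      ring
    rw [this]
    exact Dvd.intro _ rfl
end

section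
/- Let p ≥ 3 be a prime, s ≥ 1, and B = pA + I a 2×2 integer matrix where some fixed entry l of A satisfies p ∤ l. Then the least positive integer e such that the corresponding entry of (B^e − I)/p is divisible by p^(s−1) equals p^(s−1). -/
open Polynomial

lemma key_comm_aux {R : Type*} [CommRing R] (u x : R) (e : ℕ) :
    ∃ t : R, (1 + u * x) ^ e =
      1 + (e : R) * u * x + (e.choose 2 : R) * u ^ 2 * x ^ 2 + u ^ 3 * t := by
  induction e with
  | zero => exact ⟨0, by simp⟩
  | succ e ih =>
    obtain ⟨t, ht⟩ := ih
    refine ⟨(e.choose 2 : R) * x ^ 3 + t + u * t * x, ?_⟩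
    rw [pow_succ, ht, Nat.choose_succ_succ, Nat.choose_one_right]
    push_cast
    ring

lemma matrix_expand' (u : ℤ) (M : Matrix (Fin 2) (Fin 2) ℤ) (e : ℕ) :
    ∃ T : Matrix (Fin 2) (Fin 2) ℤ, (1 + u • M) ^ e =
      1 + ((e : ℤ) * u) • M + ((e.choose 2 : ℤ) * u ^ 2) • M ^ 2 + (u ^ 3) • T := by
  obtain ⟨t, ht⟩ := key_comm_aux (Polynomial.C u) (Polynomial.X) e
  refine ⟨Polynomial.aeval M t, ?_⟩
  have h := congrArg (Polynomial.aeval M) ht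
  simp only [map_add, map_mul, map_pow, map_one, map_natCast, map_intCast, aeval_C, aeval_X,
    algebraMap_int_eq, eq_intCast] at h
  simp only [zsmul_eq_mul] at *
  push_cast at h ⊢
  exact h

lemma entry_cong (p : ℕ) (r : ℕ) (hr : 1 ≤ r) (M : Matrix (Fin 2) (Fin 2) ℤ)
    (i₀ j₀ : Fin 2) (e : ℕ) :
    ((p : ℤ)) ^ (r + 1) ∣
      (((1 + ((p : ℤ) ^ r) • M) ^ e - 1) i₀ j₀ - (e : ℤ) * (p : ℤ) ^ r * M i₀ j₀) := by
  obtain ⟨T, hT⟩ := matrix_expand' ((p : ℤ) ^ r) M e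
  rw [hT]
  have key : (((1 + ((e : ℤ) * (p:ℤ)^r) • M + ((e.choose 2 : ℤ) * ((p:ℤ)^r) ^ 2) • M ^ 2
      + (((p:ℤ)^r) ^ 3) • T : Matrix (Fin 2) (Fin 2) ℤ) - 1) i₀ j₀)
        - (e : ℤ) * (p : ℤ) ^ r * M i₀ j₀
      = ((e.choose 2 : ℤ) * ((p:ℤ)^r) ^ 2) * (M ^ 2) i₀ j₀ + ((p:ℤ)^r) ^ 3 * T i₀ j₀ := by
    simp only [Matrix.sub_apply, Matrix.add_apply, Matrix.smul_apply, smul_eq_mul]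
    ring
  rw [key]
  refine dvd_add (Dvd.dvd.mul_right (Dvd.dvd.mul_left ?_ _) _) (Dvd.dvd.mul_right ?_ _)
  · rw [← pow_mul]; exact pow_dvd_pow _ (by omega)
  · rw [← pow_mul]; exact pow_dvd_pow _ (by omega)

lemma step_lemma (p r : ℕ) (hp : p.Prime) (hp3 : 3 ≤ p) (hr : 1 ≤ r)
    (M : Matrix (Fin 2) (Fin 2) ℤ) :
    ∃ M' : Matrix (Fin 2) (Fin 2) ℤ,
      (1 + ((p : ℤ) ^ r) • M) ^ p = 1 + ((p : ℤ) ^ (r + 1)) • M' ∧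
      ∀ i j, (p : ℤ) ∣ (M' i j - M i j) := by
  obtain ⟨m, hm⟩ := hp.dvd_choose_self (k := 2) (by norm_num) (by omega)
  obtain ⟨T, hT⟩ := matrix_expand' ((p : ℤ) ^ r) M p
  refine ⟨M + ((m : ℤ) * (p : ℤ) ^ r) • M ^ 2 + ((p : ℤ) ^ (2 * r - 1)) • T, ?_, ?_⟩
  · rw [hT, smul_add, smul_add, smul_smul, smul_smul]
    have hc1 : ((p : ℕ) : ℤ) * (p : ℤ) ^ r = (p : ℤ) ^ (r + 1) := by ring
    have hc2 : ((p.choose 2 : ℕ) : ℤ) * ((p : ℤ) ^ r) ^ 2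
        = (p : ℤ) ^ (r + 1) * ((m : ℤ) * (p : ℤ) ^ r) := by
      rw [hm]; push_cast; ring
    have hc3 : ((p : ℤ) ^ r) ^ 3 = (p : ℤ) ^ (r + 1) * (p : ℤ) ^ (2 * r - 1) := by
      rw [← pow_mul, ← pow_add]; congr 1; omega
    rw [hc1, hc2, hc3]
    abel
  · intro i j
    have key : (M + ((m : ℤ) * (p : ℤ) ^ r) • M ^ 2
        + ((p : ℤ) ^ (2 * r - 1)) • T : Matrix (Fin 2) (Fin 2) ℤ) i j - M i j
        = ((m : ℤ) * (p : ℤ) ^ r) * (M ^ 2) i j + (p : ℤ) ^ (2 * r - 1) * T i j := by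
      simp only [Matrix.add_apply, Matrix.smul_apply, smul_eq_mul]
      ring
    rw [key]
    refine dvd_add (Dvd.dvd.mul_right (Dvd.dvd.mul_left ?_ _) _) (Dvd.dvd.mul_right ?_ _)
    · exact dvd_pow_self _ (by omega)
    · exact dvd_pow_self _ (by omega)

lemma main_aux (p : ℕ) (hp : p.Prime) (hp3 : 3 ≤ p) (i₀ j₀ : Fin 2) :
    ∀ s r : ℕ, 1 ≤ r → ∀ M : Matrix (Fin 2) (Fin 2) ℤ, ¬ (p : ℤ) ∣ M i₀ j₀ →
    IsLeast {e : ℕ | 0 < e ∧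
        (p : ℤ) ^ (r + s) ∣ (((1 + ((p : ℤ) ^ r) • M) ^ e - 1) i₀ j₀)} (p ^ s) := by
  intro s
  induction s with
  | zero =>
    intro r hr M hM
    constructor
    · refine ⟨one_pos, ?_⟩
      rw [pow_zero, pow_one, add_sub_cancel_left]
      simp
    · rintro e ⟨he, -⟩
      rw [pow_zero]; exact he
  | succ s ih =>
    intro r hr M hM
    obtain ⟨M', hM'eq, hM'cong⟩ := step_lemma p r hp hp3 hr M
    have hM'nd : ¬ (p : ℤ) ∣ M' i₀ j₀ := by
      intro h
      have := h.sub (hM'cong i₀ j₀)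
      simp only [sub_sub_cancel] at this
      exact hM this
    have IH := ih (r + 1) (by omega) M' hM'nd
    have hexp : r + 1 + s = r + (s + 1) := by omega
    constructor
    · refine ⟨pow_pos hp.pos _, ?_⟩
      have hpow : (1 + ((p : ℤ) ^ r) • M) ^ (p ^ (s + 1))
          = (1 + ((p : ℤ) ^ (r + 1)) • M') ^ (p ^ s) := by
        rw [show p ^ (s + 1) = p * p ^ s from by ring, pow_mul, hM'eq]
      rw [hpow, ← hexp]
      exact IH.1.2
    · rintro e ⟨he0, hdvd⟩
      have hcong := entry_cong p r hr M i₀ j₀ e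
      have h1 : (p : ℤ) ^ (r + 1) ∣ (((1 + ((p : ℤ) ^ r) • M) ^ e - 1) i₀ j₀) :=
        dvd_trans (pow_dvd_pow _ (by omega)) hdvd
      have h2 : (p : ℤ) ^ (r + 1) ∣ (e : ℤ) * (p : ℤ) ^ r * M i₀ j₀ := by
        have := h1.sub hcong
        simpa using this
      have h3 : (p : ℤ) ∣ (e : ℤ) * M i₀ j₀ := by
        have hne : (p : ℤ) ^ r ≠ 0 := by positivity
        rw [show (e : ℤ) * (p : ℤ) ^ r * M i₀ j₀ = (p : ℤ) ^ r * ((e : ℤ) * M i₀ j₀) from by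
          ring, pow_succ', mul_comm ((p:ℤ)) ((p:ℤ) ^ r)] at h2
        exact (mul_dvd_mul_iff_left hne).mp h2
      have hpe : (p : ℤ) ∣ (e : ℤ) :=
        ((Nat.prime_iff_prime_int.mp hp).dvd_mul.mp h3).resolve_right hM
      obtain ⟨e', rfl⟩ := Int.natCast_dvd_natCast.mp hpe
      have he'0 : 0 < e' := by
        rcases Nat.eq_zero_or_pos e' with h | h
        · subst h; simp at he0
        · exact h
      have hmem : e' ∈ {e : ℕ | 0 < e ∧ (p : ℤ) ^ (r + 1 + s) ∣
          (((1 + ((p : ℤ) ^ (r + 1)) • M') ^ e - 1) i₀ j₀)} := by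
        refine ⟨he'0, ?_⟩
        rw [← hM'eq, ← pow_mul, hexp]
        exact hdvd
      have := IH.2 hmem
      calc p ^ (s + 1) = p * p ^ s := by ring
      _ ≤ p * e' := Nat.mul_le_mul_left _ this

theorem least_exponent_eq_p_pow_s_sub_one
    (p : ℕ) (hp : p.Prime) (hp3 : 3 ≤ p) (s : ℕ) (hs : 1 ≤ s)
    (A : Matrix (Fin 2) (Fin 2) ℤ) (i₀ j₀ : Fin 2)
    (hA : ¬ (p : ℤ) ∣ A i₀ j₀) :
    IsLeast {e : ℕ | 0 < e ∧
        (p : ℤ) ^ s ∣ ((((p : ℤ) • A + 1) ^ e - 1) i₀ j₀)}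
      (p ^ (s - 1)) := by
  have h := main_aux p hp hp3 i₀ j₀ (s - 1) 1 le_rfl A hA
  simp only [pow_one] at h
  rw [show 1 + (s - 1) = s from by omega,
    show (1 : Matrix (Fin 2) (Fin 2) ℤ) + (p : ℤ) • A = (p : ℤ) • A + 1 from add_comm _ _] at h
  exact h
end

section
/- Let p ≥ 3 be a prime, s ≥ 1, M ∈ M₂(ℤ) invertible mod p with order ι mod p, and write M^ι = pA + I. If some entry of A is not divisible by p, then the order of M modulo p^s equals exactly ι·p^(s−1). -/
open Finset

local notation "R2" => Matrix (Fin 2) (Fin 2) ℤ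

lemma aux_binom_split (y : R2) (n : ℕ) (hn : 1 ≤ n) :
    (1 + y)^n = 1 + (n:ℤ) • y + ∑ m ∈ Finset.Ico 2 (n+1), (n.choose m : ℤ) • y^m := by
  have hcomm : Commute y (1 : R2) := Commute.one_right y
  rw [add_comm 1 y, hcomm.add_pow]
  have hset : Finset.range (n+1) = insert 0 (insert 1 (Finset.Ico 2 (n+1))) := by
    ext m; simp; omega
  have hterm : ∀ m : ℕ, y ^ m * (1:R2) ^ (n - m) * (n.choose m : R2) = (n.choose m : ℤ) • y ^ m := by
    intro m
    rw [one_pow, mul_one, ← (Nat.cast_commute (n.choose m) (y^m)).eq, ← nsmul_eq_mul, natCast_zsmul]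
  have h1 : y * (n : R2) = (n:ℤ) • y := by
    rw [← (Nat.cast_commute n y).eq, ← nsmul_eq_mul, natCast_zsmul]
  have hterm2 : ∀ m : ℕ, y ^ m * (n.choose m : R2) = (n.choose m : ℤ) • y ^ m := by
    intro m
    rw [← (Nat.cast_commute (n.choose m) (y^m)).eq, ← nsmul_eq_mul, natCast_zsmul]
  rw [hset, Finset.sum_insert (by simp), Finset.sum_insert (by simp)]
  simp only [hterm, pow_zero, pow_one, Nat.choose_zero_right, Nat.choose_one_right,
    Nat.cast_one, one_smul, one_pow, one_mul, mul_one, h1, hterm2]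
  abel

lemma aux_extract (d : ℤ) (s : Finset ℕ) (f : ℕ → ℤ) (g : ℕ → R2)
    (h : ∀ m ∈ s, d ∣ f m) : ∃ C : R2, ∑ m ∈ s, f m • g m = d • C := by
  refine ⟨∑ m ∈ s, (f m / d) • g m, ?_⟩
  rw [Finset.smul_sum]
  exact Finset.sum_congr rfl fun m hm => by rw [smul_smul, Int.mul_ediv_cancel' (h m hm)]

lemma aux_key_pow_p (p : ℕ) (hp : p.Prime) (hp3 : 3 ≤ p) (r : ℕ) (hr : 1 ≤ r) (B : R2) :
    ∃ C : R2, (1 + (p:ℤ)^r • B)^p = 1 + (p:ℤ)^(r+1) • B + (p:ℤ)^(r+2) • C := by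
  rw [aux_binom_split _ p (by omega)]
  have hfst : (p:ℤ) • ((p:ℤ)^r • B) = (p:ℤ)^(r+1) • B := by
    rw [smul_smul, pow_succ, mul_comm]
  have hterm : ∀ m : ℕ, (p.choose m : ℤ) • ((p:ℤ)^r • B)^m
      = ((p.choose m : ℤ) * (p:ℤ)^(r*m)) • B^m := by
    intro m
    rw [smul_pow, smul_smul, ← pow_mul]
  have hdvd : ∀ m ∈ Finset.Ico 2 (p+1), ((p:ℤ))^(r+2) ∣ (p.choose m : ℤ) * (p:ℤ)^(r*m) := by
    intro m hm
    simp only [Finset.mem_Ico] at hm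
    rcases eq_or_lt_of_le (Nat.lt_succ_iff.mp hm.2) with hmp | hmp
    · -- m = p
      apply Dvd.dvd.mul_left
      apply pow_dvd_pow
      subst hmp
      nlinarith [hm.1]
    · -- m < p : p ∣ choose p m
      have h1 : (p:ℤ) ∣ (p.choose m : ℤ) := by
        exact_mod_cast Int.natCast_dvd_natCast.mpr (hp.dvd_choose_self (by omega) hmp)
      have h2 : ((p:ℤ))^(r+1) ∣ (p:ℤ)^(r*m) := pow_dvd_pow _ (by nlinarith [hm.1])
      calc ((p:ℤ))^(r+2) = (p:ℤ) * (p:ℤ)^(r+1) := by ring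
        _ ∣ (p.choose m : ℤ) * (p:ℤ)^(r*m) := mul_dvd_mul h1 h2
  simp only [hterm]
  obtain ⟨C, hC⟩ := aux_extract ((p:ℤ)^(r+2)) _ _ (fun m => B^m) hdvd
  exact ⟨C, by rw [hfst, hC]⟩

lemma aux_key_pow_u (p : ℕ) (r : ℕ) (hr : 1 ≤ r) (u : ℕ) (hu : 1 ≤ u) (B : R2) :
    ∃ C : R2, (1 + (p:ℤ)^r • B)^u = 1 + (p:ℤ)^r • ((u:ℤ) • B + (p:ℤ) • C) := by
  rw [aux_binom_split _ u hu]
  have hterm : ∀ m : ℕ, (u.choose m : ℤ) • ((p:ℤ)^r • B)^m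
      = ((u.choose m : ℤ) * (p:ℤ)^(r*m)) • B^m := by
    intro m
    rw [smul_pow, smul_smul, ← pow_mul]
  have hdvd : ∀ m ∈ Finset.Ico 2 (u+1), ((p:ℤ))^(r+1) ∣ (u.choose m : ℤ) * (p:ℤ)^(r*m) := by
    intro m hm
    simp only [Finset.mem_Ico] at hm
    exact Dvd.dvd.mul_left (pow_dvd_pow _ (by nlinarith [hm.1])) _
  simp only [hterm]
  obtain ⟨C, hC⟩ := aux_extract ((p:ℤ)^(r+1)) _ _ (fun m => B^m) hdvd
  refine ⟨C, ?_⟩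
  rw [hC, smul_add, smul_comm ((p:ℤ)^r) ((u:ℤ)) B, smul_smul ((p:ℤ)^r) ((p:ℤ)) C]
  rw [← pow_succ]
  abel

theorem order_mod_p_pow_s_eq
    (p : ℕ) (hp : p.Prime) (hp3 : 3 ≤ p) (s : ℕ) (hs : 1 ≤ s)
    (M A : Matrix (Fin 2) (Fin 2) ℤ) (hdet : ¬ (p : ℤ) ∣ M.det)
    (ι : ℕ)
    (hι : IsLeast {k : ℕ | 0 < k ∧ ∀ i j : Fin 2, (p : ℤ) ∣ ((M ^ k - 1) i j)} ι)
    (hMι : M ^ ι = (p : ℤ) • A + 1)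
    (hA : ∃ i j : Fin 2, ¬ (p : ℤ) ∣ A i j) :
    IsLeast {k : ℕ | 0 < k ∧ ∀ i j : Fin 2, (p : ℤ) ^ s ∣ ((M ^ k - 1) i j)}
      (ι * p ^ (s - 1)) := by
  have hι_pos : 0 < ι := hι.1.1
  have hq0 : (p:ℤ) ≠ 0 := by exact_mod_cast hp.ne_zero
  have hMι' : M ^ ι = 1 + (p:ℤ) • A := by rw [hMι]; abel
  -- powers of M^ι have the structure 1 + p^(t+1) A + p^(t+2) C
  have powA : ∀ t : ℕ, ∃ C : R2, M ^ (ι * p ^ t) = 1 + (p:ℤ)^(t+1) • A + (p:ℤ)^(t+2) • C := by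
    intro t
    induction t with
    | zero => exact ⟨0, by simpa using hMι'⟩
    | succ t ih =>
      obtain ⟨C, hC⟩ := ih
      have hre : M ^ (ι * p ^ (t+1)) = (M ^ (ι * p ^ t)) ^ p := by
        rw [← pow_mul, pow_succ, mul_assoc]
      have hB : M ^ (ι * p ^ t) = 1 + (p:ℤ)^(t+1) • (A + (p:ℤ) • C) := by
        rw [hC, smul_add, smul_smul, ← pow_succ, add_assoc]
      obtain ⟨C', hC'⟩ := aux_key_pow_p p hp hp3 (t+1) (by omega) (A + (p:ℤ) • C)
      refine ⟨C + C', ?_⟩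
      rw [hre, hB, hC', smul_add, smul_smul, ← pow_succ, smul_add]
      abel
  -- powers of M^ι are ≡ 1 mod p
  have powB : ∀ d : ℕ, ∃ C : R2, M ^ (ι * d) = 1 + (p:ℤ) • C := by
    intro d
    induction d with
    | zero => exact ⟨0, by simp⟩
    | succ d ih =>
      obtain ⟨C, hC⟩ := ih
      refine ⟨A + C + (p:ℤ) • (C * A), ?_⟩
      rw [mul_add, mul_one, pow_add, hC, hMι']
      simp only [mul_add, add_mul, one_mul, mul_one, smul_mul_assoc, mul_smul_comm,
        smul_smul, smul_add]
      abel
  constructor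
  · -- membership
    refine ⟨by positivity, ?_⟩
    obtain ⟨C, hC⟩ := powA (s-1)
    have hs1 : s - 1 + 1 = s := by omega
    intro i j
    rw [hC, hs1]
    have : (1 : R2) + (p:ℤ)^s • A + (p:ℤ)^(s-1+2) • C - 1 = (p:ℤ)^s • A + (p:ℤ)^(s-1+2) • C := by
      abel
    rw [this, Matrix.add_apply, Matrix.smul_apply, Matrix.smul_apply, smul_eq_mul, smul_eq_mul]
    exact dvd_add (dvd_mul_right _ _)
      (Dvd.dvd.mul_right (pow_dvd_pow _ (by omega)) _)
  · -- lower bound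
    rintro k ⟨hk0, hk⟩
    -- step 1: ι ∣ k
    have hq1 : ∀ i j, (p:ℤ) ∣ (M ^ k - 1) i j := by
      intro i j
      exact dvd_trans (dvd_pow_self _ (by omega)) (hk i j)
    have hdvd_ι : ι ∣ k := by
      obtain ⟨C, hC⟩ := powB (k / ι)
      have hkeq : k = ι * (k / ι) + k % ι := (Nat.div_add_mod k ι).symm
      have hMk : M ^ k = M ^ (k % ι) + (p:ℤ) • (C * M ^ (k % ι)) := by
        conv_lhs => rw [hkeq]
        rw [pow_add, hC, add_mul, one_mul, smul_mul_assoc]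
      have hrd : ∀ i j, (p:ℤ) ∣ (M ^ (k % ι) - 1) i j := by
        intro i j
        have : M ^ (k % ι) - 1 = (M ^ k - 1) - (p:ℤ) • (C * M ^ (k % ι)) := by
          rw [hMk]; abel
        rw [this, Matrix.sub_apply, Matrix.smul_apply, smul_eq_mul]
        exact dvd_sub (hq1 i j) (dvd_mul_right _ _)
      by_contra hnd
      have hr0 : 0 < k % ι := Nat.pos_of_ne_zero (fun h => hnd (Nat.dvd_of_mod_eq_zero h))
      have := hι.2 ⟨hr0, hrd⟩
      have := Nat.mod_lt k hι_pos
      omega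
    obtain ⟨m, rfl⟩ := hdvd_ι
    have hm0 : m ≠ 0 := by rintro rfl; simp at hk0
    -- step 2: factor out p-part of m
    set t := m.factorization p with ht
    have hmu : p ^ t * (m / p ^ t) = m := Nat.ordProj_mul_ordCompl_eq_self m p
    set u := m / p ^ t with hu
    have hpu : ¬ p ∣ u := Nat.not_dvd_ordCompl hp hm0
    have hu0 : 1 ≤ u := Nat.pos_of_ne_zero (by rintro h; rw [h, Nat.mul_zero] at hmu; omega)
    -- step 3: s ≤ t + 1
    have hst : s ≤ t + 1 := by
      by_contra hcon
      push_neg at hcon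
      obtain ⟨C, hC⟩ := powA t
      have hB : M ^ (ι * p ^ t) = 1 + (p:ℤ)^(t+1) • (A + (p:ℤ) • C) := by
        rw [hC, smul_add, smul_smul, ← pow_succ, add_assoc]
      obtain ⟨D, hD⟩ := aux_key_pow_u p (t+1) (by omega) u hu0 (A + (p:ℤ) • C)
      have hMk : M ^ (ι * m) = 1 + (p:ℤ)^(t+1) • ((u:ℤ) • (A + (p:ℤ) • C) + (p:ℤ) • D) := by
        rw [← hmu, ← mul_assoc, pow_mul, hB, hD]
      obtain ⟨i, j, hij⟩ := hA
      have hent := hk i j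
      rw [hMk] at hent
      have hone : (1 : R2) + (p:ℤ)^(t+1) • ((u:ℤ) • (A + (p:ℤ) • C) + (p:ℤ) • D) - 1
          = (p:ℤ)^(t+1) • ((u:ℤ) • (A + (p:ℤ) • C) + (p:ℤ) • D) := by abel
      rw [hone] at hent
      have hent2 : ((p:ℤ))^(t+2) ∣ ((p:ℤ)^(t+1) • ((u:ℤ) • (A + (p:ℤ) • C) + (p:ℤ) • D)) i j :=
        dvd_trans (pow_dvd_pow _ (by omega)) hent
      have hexp : ((p:ℤ)^(t+1) • ((u:ℤ) • (A + (p:ℤ) • C) + (p:ℤ) • D)) i j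
          = (p:ℤ)^(t+1) * ((u:ℤ) * A i j + (p:ℤ) * ((u:ℤ) * C i j + D i j)) := by
        simp only [Matrix.add_apply, Matrix.smul_apply, smul_eq_mul]
        ring
      rw [hexp] at hent2
      have h3 : (p:ℤ) ∣ ((u:ℤ) * A i j + (p:ℤ) * ((u:ℤ) * C i j + D i j)) := by
        have h4 : (p:ℤ)^(t+1) * (p:ℤ) ∣
            (p:ℤ)^(t+1) * ((u:ℤ) * A i j + (p:ℤ) * ((u:ℤ) * C i j + D i j)) := by
          rw [← pow_succ]; exact hent2
        exact (mul_dvd_mul_iff_left (pow_ne_zero (t+1) hq0)).mp h4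
      have h5 : (p:ℤ) ∣ (u:ℤ) * A i j := by
        have := dvd_sub h3 (dvd_mul_right (p:ℤ) ((u:ℤ) * C i j + D i j))
        simpa using this
      have hqp : Prime ((p:ℤ)) := Nat.prime_iff_prime_int.mp hp
      rcases hqp.dvd_mul.mp h5 with h6 | h6
      · exact hpu (Int.natCast_dvd_natCast.mp h6)
      · exact hij h6
    -- step 4: conclude
    have hdvd : ι * p ^ (s-1) ∣ ι * m :=
      mul_dvd_mul_left ι (dvd_trans (pow_dvd_pow p (by omega)) (Nat.ordProj_dvd m p))
    exact Nat.le_of_dvd hk0 hdvd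
end

section
/- A matrix M ∈ GL(2, 𝔽_p) has the property that for every nonzero vector v ∈ 𝔽_p², the set {Mv, M²v, …, M^(p²−1)v} equals 𝔽_p² \ {0}, if and only if the multiplicative order of M in GL(2, 𝔽_p) equals p² − 1. -/
open Matrix

section Aux

variable {p : ℕ} [Fact p.Prime]

private lemma ch2 (M : Matrix (Fin 2) (Fin 2) (ZMod p)) :
    M ^ 2 = M.trace • M - M.det • 1 := by
  ext i j
  fin_cases i <;> fin_cases j <;>
    simp [pow_two, Matrix.mul_apply, Fin.sum_univ_two, Matrix.trace_fin_two,
      Matrix.det_fin_two, Matrix.one_apply] <;> ring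

private lemma pow_mem_span (M : Matrix (Fin 2) (Fin 2) (ZMod p)) (n : ℕ) :
    ∃ a b : ZMod p, M ^ n = a • 1 + b • M := by
  induction n with
  | zero => exact ⟨1, 0, by simp⟩
  | succ n ih =>
    obtain ⟨a, b, h⟩ := ih
    refine ⟨-(b * M.det), a + b * M.trace, ?_⟩
    rw [pow_succ, h, add_mul, smul_mul_assoc, smul_mul_assoc, one_mul, ← pow_two, ch2 M]
    module

private lemma pow_eq_one_of_eig (M : Matrix (Fin 2) (Fin 2) (ZMod p)) (hM : IsUnit M.det)
    {v : Fin 2 → ZMod p} (hv : v ≠ 0) {c : ZMod p} (hc : M *ᵥ v = c • v) :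
    M ^ (p * (p - 1)) = 1 := by
  have hp2 : 2 ≤ p := (Fact.out : p.Prime).two_le
  have hMinj : Function.Injective M.mulVec :=
    Matrix.mulVec_injective_iff_isUnit.2 ((Matrix.isUnit_iff_isUnit_det M).2 hM)
  -- the characteristic equation for the eigenvalue
  have hchar : c ^ 2 - M.trace * c + M.det = 0 := by
    have h2 : (M ^ 2) *ᵥ v = (c ^ 2) • v := by
      rw [pow_two, ← Matrix.mulVec_mulVec, hc, Matrix.mulVec_smul, hc, smul_smul, ← pow_two]
    rw [ch2 M, Matrix.sub_mulVec, Matrix.smul_mulVec, Matrix.smul_mulVec,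
      Matrix.one_mulVec, hc, smul_smul] at h2
    have h3 : (c ^ 2 - M.trace * c + M.det) • v = 0 := by
      have h4 : c ^ 2 • v = (M.trace * c) • v - M.det • v := h2.symm
      rw [add_smul, sub_smul, h4]
      module
    rcases smul_eq_zero.mp h3 with h | h
    · exact h
    · exact absurd h hv
  have hc0 : c ≠ 0 := by
    intro h0
    subst h0
    apply hv
    apply hMinj
    rw [hc, zero_smul, Matrix.mulVec_zero]
  have hd0 : M.det ≠ 0 := hM.ne_zero
  have hdc : M.det = c * (M.trace - c) := by linear_combination hchar
  have hμ0 : M.trace - c ≠ 0 := by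
    intro h0
    rw [hdc, h0, mul_zero] at hd0
    exact hd0 rfl
  have hMA : M * (M - c • 1) = (M.trace - c) • (M - c • 1) := by
    rw [mul_sub, ← pow_two, mul_smul_comm, mul_one, ch2 M, hdc]
    module
  have hc1 : c ^ (p * (p - 1)) = 1 := by
    rw [mul_comm, pow_mul, ZMod.pow_card_sub_one_eq_one hc0, one_pow]
  have hμ1 : (M.trace - c) ^ (p * (p - 1)) = 1 := by
    rw [mul_comm, pow_mul, ZMod.pow_card_sub_one_eq_one hμ0, one_pow]
  by_cases hcm : c = M.trace - c
  · -- repeated eigenvalue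
    have key : ∀ n : ℕ, M ^ (n + 1) =
        c ^ (n + 1) • (1 : Matrix (Fin 2) (Fin 2) (ZMod p)) +
          (((n : ZMod p) + 1) * c ^ n) • (M - c • 1) := by
      intro n
      induction n with
      | zero => rw [pow_one]; push_cast; module
      | succ n ih =>
        rw [pow_succ' M (n + 1), ih, mul_add, mul_smul_comm, mul_one, mul_smul_comm, hMA,
          ← hcm]
        push_cast
        module
    have hn1 : 1 ≤ p * (p - 1) := by
      have : 1 ≤ p - 1 := by omega
      calc 1 ≤ 1 * 1 := by norm_num
        _ ≤ p * (p - 1) := Nat.mul_le_mul (by omega) this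
    obtain ⟨m, hm⟩ : ∃ m, p * (p - 1) = m + 1 := ⟨p * (p - 1) - 1, by omega⟩
    have hcast : ((m : ZMod p) + 1) = 0 := by
      have h1 : ((m + 1 : ℕ) : ZMod p) = 0 := by
        rw [← hm]
        push_cast
        simp [ZMod.natCast_self]
      push_cast at h1
      exact h1
    rw [hm, key m, ← hm, hc1, hcast, zero_mul, zero_smul, add_zero, one_smul]
  · -- distinct eigenvalues
    have key : ∀ n : ℕ, (c - (M.trace - c)) • M ^ n =
        (c ^ n * (c - (M.trace - c))) • (1 : Matrix (Fin 2) (Fin 2) (ZMod p)) +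
          (c ^ n - (M.trace - c) ^ n) • (M - c • 1) := by
      intro n
      induction n with
      | zero => simp
      | succ n ih =>
        have h1 : (c - (M.trace - c)) • M ^ (n + 1) = M * ((c - (M.trace - c)) • M ^ n) := by
          rw [mul_smul_comm, ← pow_succ']
        rw [h1, ih, mul_add, mul_smul_comm, mul_one, mul_smul_comm, hMA]
        module
    have h2 := key (p * (p - 1))
    rw [hc1, hμ1, sub_self, zero_smul, add_zero, one_mul] at h2
    exact smul_right_injective _ (sub_ne_zero.2 hcm) h2

private lemma no_eig (M : Matrix (Fin 2) (Fin 2) (ZMod p)) (hM : IsUnit M.det)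
    (hord : orderOf M = p ^ 2 - 1) {v : Fin 2 → ZMod p} (hv : v ≠ 0) {c : ZMod p}
    (hc : M *ᵥ v = c • v) : False := by
  have hp2 : 2 ≤ p := (Fact.out : p.Prime).two_le
  have h1 := pow_eq_one_of_eig M hM hv hc
  have hdvd : p ^ 2 - 1 ∣ p * (p - 1) := hord ▸ orderOf_dvd_of_pow_eq_one h1
  obtain ⟨k, rfl⟩ : ∃ k, p = k + 2 := ⟨p - 2, by omega⟩
  have hle : (k + 2) ^ 2 - 1 ≤ (k + 2) * ((k + 2) - 1) :=
    Nat.le_of_dvd (Nat.mul_pos (by omega) (by omega)) hdvd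
  have e1 : (k + 2) ^ 2 = k * k + 4 * k + 4 := by ring
  have e2 : (k + 2) * ((k + 2) - 1) = k * k + 3 * k + 2 := by
    rw [show (k + 2) - 1 = k + 1 from rfl]; ring
  omega

end Aux

theorem ergodic_iff_order_eq
    (p : ℕ) [Fact p.Prime]
    (M : Matrix (Fin 2) (Fin 2) (ZMod p)) (hM : IsUnit M.det) :
    (∀ v : Fin 2 → ZMod p, v ≠ 0 →
        {w : Fin 2 → ZMod p | ∃ j : ℕ, 1 ≤ j ∧ j ≤ p ^ 2 - 1 ∧ (M ^ j).mulVec v = w}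
          = {w : Fin 2 → ZMod p | w ≠ 0})
      ↔ orderOf M = p ^ 2 - 1 := by
  classical
  have hp2 : 2 ≤ p := (Fact.out : p.Prime).two_le
  have hq4 : 4 ≤ p ^ 2 := by
    calc 4 = 2 ^ 2 := by norm_num
    _ ≤ p ^ 2 := Nat.pow_le_pow_left hp2 2
  have hMU : IsUnit M := (Matrix.isUnit_iff_isUnit_det M).2 hM
  have hMinj : Function.Injective M.mulVec := Matrix.mulVec_injective_iff_isUnit.2 hMU
  have hMjinj : ∀ j : ℕ, Function.Injective (M ^ j).mulVec := fun j =>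
    Matrix.mulVec_injective_iff_isUnit.2 (hMU.pow j)
  have hcardV : Fintype.card (Fin 2 → ZMod p) = p ^ 2 := by
    rw [Fintype.card_fun, ZMod.card, Fintype.card_fin]
  have hsingle : ∀ i : Fin 2, (Pi.single i 1 : Fin 2 → ZMod p) ≠ 0 := by
    intro i h
    have := congrFun h i
    simp at this
  constructor
  · intro H
    -- step 1: injectivity of j ↦ M^j u on [1, p²-1] for u ≠ 0
    have injOn : ∀ u : Fin 2 → ZMod p, u ≠ 0 → ∀ j k : ℕ, 1 ≤ j → j ≤ p ^ 2 - 1 →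
        1 ≤ k → k ≤ p ^ 2 - 1 → (M ^ j) *ᵥ u = (M ^ k) *ᵥ u → j = k := by
      intro u hu j k hj1 hj2 hk1 hk2 hjk
      set g : Fin (p ^ 2 - 1) → (Fin 2 → ZMod p) := fun i => (M ^ ((i : ℕ) + 1)) *ᵥ u with hg
      have hset : (↑(Finset.image g Finset.univ) : Set (Fin 2 → ZMod p)) = {w | w ≠ 0} := by
        rw [← H u hu]
        ext w
        simp only [Finset.coe_image, Finset.coe_univ, Set.image_univ, Set.mem_range,
          Set.mem_setOf_eq, hg]
        constructor
        · rintro ⟨i, rfl⟩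
          exact ⟨(i : ℕ) + 1, by omega, by omega, rfl⟩
        · rintro ⟨j, hj1, hj2, rfl⟩
          refine ⟨⟨j - 1, by omega⟩, ?_⟩
          show (M ^ ((j - 1) + 1)) *ᵥ u = _
          rw [show j - 1 + 1 = j by omega]
      have hfin : Finset.image g Finset.univ = Finset.univ.erase 0 := by
        ext w
        have h1 : w ∈ Finset.image g Finset.univ ↔ w ≠ 0 := by
          rw [← Finset.mem_coe, hset]; simp
        simp [h1, Finset.mem_erase]
      have hcard : (Finset.image g Finset.univ).card = p ^ 2 - 1 := by
        rw [hfin, Finset.card_erase_of_mem (Finset.mem_univ _), Finset.card_univ, hcardV]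
      have hginj := Finset.card_image_iff.mp
        (by rw [hcard, Finset.card_univ, Fintype.card_fin] :
          (Finset.image g Finset.univ).card = Finset.univ.card)
      have h2 : (⟨j - 1, by omega⟩ : Fin (p ^ 2 - 1)) = ⟨k - 1, by omega⟩ := by
        apply hginj (Finset.mem_coe.mpr (Finset.mem_univ _)) (Finset.mem_coe.mpr (Finset.mem_univ _))
        show (M ^ ((j - 1) + 1)) *ᵥ u = (M ^ ((k - 1) + 1)) *ᵥ u
        rw [show j - 1 + 1 = j by omega, show k - 1 + 1 = k by omega]
        exact hjk
      have h3 := congrArg Fin.val h2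
      simp only at h3
      omega
    -- step 2: M^(p²-1) fixes every vector
    have hfix : ∀ v : Fin 2 → ZMod p, (M ^ (p ^ 2 - 1)) *ᵥ v = v := by
      intro v
      by_cases hv : v = 0
      · simp [hv]
      have hu : M *ᵥ v ≠ 0 := fun h => hv (hMinj (by simpa using h))
      have hne : (M ^ (p ^ 2)) *ᵥ v ≠ 0 := fun h => hv ((hMjinj (p ^ 2)) (by simpa using h))
      have hmem : (M ^ (p ^ 2)) *ᵥ v ∈
          {w : Fin 2 → ZMod p | ∃ j : ℕ, 1 ≤ j ∧ j ≤ p ^ 2 - 1 ∧ (M ^ j) *ᵥ v = w} := by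
        rw [H v hv]
        exact hne
      obtain ⟨k, hk1, hk2, hk⟩ := hmem
      have e : ∀ n : ℕ, 1 ≤ n → (M ^ (n - 1)) *ᵥ (M *ᵥ v) = (M ^ n) *ᵥ v := by
        intro n hn
        rw [Matrix.mulVec_mulVec, ← pow_succ, show n - 1 + 1 = n by omega]
      have hk1' : k = 1 := by
        by_contra hk1''
        have h1 : (M ^ (k - 1)) *ᵥ (M *ᵥ v) = (M ^ (p ^ 2 - 1)) *ᵥ (M *ᵥ v) := by
          rw [e k hk1, e (p ^ 2) (by omega)]
          exact hk
        have := injOn (M *ᵥ v) hu (k - 1) (p ^ 2 - 1) (by omega) (by omega) (by omega)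
          (by omega) h1
        omega
      rw [hk1', pow_one] at hk
      apply hMinj
      rw [Matrix.mulVec_mulVec, ← pow_succ', show p ^ 2 - 1 + 1 = p ^ 2 by omega]
      exact hk.symm
    -- step 3: hence M^(p²-1) = 1
    have hpow1 : M ^ (p ^ 2 - 1) = 1 := by
      ext i j
      have h2 := congrFun (hfix (Pi.single j 1)) i
      rw [Matrix.mulVec_single] at h2
      simp only [MulOpposite.op_one, one_smul, Matrix.col_apply] at h2
      rw [h2]
      by_cases hij : i = j <;> simp [Matrix.one_apply, Pi.single_apply, hij, eq_comm]
    have hdvd := orderOf_dvd_of_pow_eq_one hpow1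
    have hne0 : orderOf M ≠ 0 := by
      intro h0
      rw [h0] at hdvd
      have := Nat.eq_zero_of_zero_dvd hdvd
      omega
    by_contra hne
    have hlt : orderOf M < p ^ 2 - 1 :=
      lt_of_le_of_ne (Nat.le_of_dvd (by omega) hdvd) hne
    have h5 : (M ^ (orderOf M + 1)) *ᵥ (Pi.single 0 1 : Fin 2 → ZMod p)
        = (M ^ 1) *ᵥ (Pi.single 0 1 : Fin 2 → ZMod p) := by
      rw [pow_succ, pow_orderOf_eq_one, one_mul, pow_one]
    have := injOn _ (hsingle 0) (orderOf M + 1) 1 (by omega) (by omega) (by omega)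
      (by omega) h5
    omega
  · intro hord v hv
    have noeig : ∀ u : Fin 2 → ZMod p, u ≠ 0 → ∀ c : ZMod p, M *ᵥ u = c • u → False :=
      fun u hu c hc => no_eig M hM hord hu hc
    have hnotscalar : ∀ c : ZMod p, M ≠ c • 1 := by
      intro c h
      exact noeig (Pi.single 0 1) (hsingle 0) c
        (by rw [h, Matrix.smul_mulVec, Matrix.one_mulVec])
    set Φ : ZMod p × ZMod p → Matrix (Fin 2) (Fin 2) (ZMod p) :=
      fun ab => ab.1 • 1 + ab.2 • M with hΦ
    have hΦinj : Function.Injective Φ := by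
      rintro ⟨a, b⟩ ⟨a', b'⟩ h
      simp only [hΦ] at h
      by_cases hb : b = b'
      · subst hb
        have h1 : a • (1 : Matrix (Fin 2) (Fin 2) (ZMod p)) = a' • 1 := by
          have := add_right_cancel h
          exact this
        have h2 : a = a' := by
          have h3 := congrFun (congrFun h1 0) 0
          simpa [Matrix.one_apply] using h3
        simp [h2]
      · exfalso
        have hbb : b' - b ≠ 0 := sub_ne_zero.2 (Ne.symm hb)
        have h2 : (b' - b) • M = (a - a') • (1 : Matrix (Fin 2) (Fin 2) (ZMod p)) := by
          calc (b' - b) • M = (a' • 1 + b' • M) - (a' • 1 + b • M) := by module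
          _ = (a • 1 + b • M) - (a' • 1 + b • M) := by rw [← h]
          _ = (a - a') • 1 := by module
        apply hnotscalar ((b' - b)⁻¹ * (a - a'))
        calc M = (b' - b)⁻¹ • ((b' - b) • M) := by
              rw [smul_smul, inv_mul_cancel₀ hbb, one_smul]
        _ = (b' - b)⁻¹ • ((a - a') • (1 : Matrix (Fin 2) (Fin 2) (ZMod p))) := by rw [h2]
        _ = ((b' - b)⁻¹ * (a - a')) • 1 := by rw [smul_smul]
    set Ψ : ZMod p × ZMod p → (Fin 2 → ZMod p) := fun ab => (Φ ab) *ᵥ v with hΨ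
    have hΨinj : Function.Injective Ψ := by
      rintro ⟨a, b⟩ ⟨a', b'⟩ h
      simp only [hΨ, hΦ, Matrix.add_mulVec, Matrix.smul_mulVec, Matrix.one_mulVec] at h
      by_cases hb : b = b'
      · subst hb
        have h1 : a • v = a' • v := add_right_cancel h
        have h2 : (a - a') • v = 0 := by rw [sub_smul, h1, sub_self]
        rcases smul_eq_zero.mp h2 with h3 | h3
        · simp [sub_eq_zero.mp h3]
        · exact absurd h3 hv
      · exfalso
        have hbb : b - b' ≠ 0 := sub_ne_zero.2 hb
        have h3 : (b - b') • (M *ᵥ v) = (a' - a) • v := by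
          calc (b - b') • (M *ᵥ v) = (a • v + b • (M *ᵥ v)) - (a • v + b' • (M *ᵥ v)) := by
                module
          _ = (a' • v + b' • (M *ᵥ v)) - (a • v + b' • (M *ᵥ v)) := by rw [h]
          _ = (a' - a) • v := by module
        have h4 : M *ᵥ v = ((b - b')⁻¹ * (a' - a)) • v := by
          calc M *ᵥ v = (b - b')⁻¹ • ((b - b') • (M *ᵥ v)) := by
                rw [smul_smul, inv_mul_cancel₀ hbb, one_smul]
          _ = (b - b')⁻¹ • ((a' - a) • v) := by rw [h3]
          _ = ((b - b')⁻¹ * (a' - a)) • v := by rw [smul_smul]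
        exact noeig v hv _ h4
    have hΨsurj : Function.Surjective Ψ := by
      have hcards : Fintype.card (ZMod p × ZMod p) = Fintype.card (Fin 2 → ZMod p) := by
        rw [Fintype.card_prod, ZMod.card, hcardV, pow_two]
      exact ((Fintype.bijective_iff_injective_and_card Ψ).2 ⟨hΨinj, hcards⟩).2
    ext w
    simp only [Set.mem_setOf_eq]
    constructor
    · rintro ⟨j, hj1, hj2, rfl⟩
      intro h0
      exact hv ((hMjinj j) (by simpa using h0))
    · intro hw
      obtain ⟨⟨a, b⟩, hab⟩ := hΨsurj w
      have hN0 : Φ (a, b) ≠ 0 := by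
        intro h
        apply hw
        rw [← hab]
        simp [hΨ, h]
      obtain ⟨u, hu⟩ := id hMU
      have hou : orderOf u = p ^ 2 - 1 := by rw [← orderOf_units, hu, hord]
      set T : Finset (Matrix (Fin 2) (Fin 2) (ZMod p)) :=
        Finset.image (fun i : Fin (p ^ 2 - 1) => M * M ^ (i : ℕ)) Finset.univ with hT
      have hTcard : T.card = p ^ 2 - 1 := by
        have hinj : Set.InjOn (fun i : Fin (p ^ 2 - 1) => M * M ^ (i : ℕ))
            (Finset.univ : Finset (Fin (p ^ 2 - 1))) := by
          intro i _ k _ hik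
          have h1 : M ^ (i : ℕ) = M ^ (k : ℕ) := by
            have h2 := congrArg (fun X => M⁻¹ * X) hik
            simpa [← mul_assoc, Matrix.nonsing_inv_mul M hM] using h2
          have h2 : u ^ (i : ℕ) = u ^ (k : ℕ) := by
            apply Units.ext
            rw [Units.val_pow_eq_pow_val, Units.val_pow_eq_pow_val, hu]
            exact h1
          have h3 : (i : ℕ) = (k : ℕ) :=
            pow_injOn_Iio_orderOf (by simp [hou, i.isLt]) (by simp [hou, k.isLt]) h2
          exact Fin.ext h3
        rw [hT, Finset.card_image_iff.mpr hinj, Finset.card_univ, Fintype.card_fin]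
      set Vf : Finset (Matrix (Fin 2) (Fin 2) (ZMod p)) := Finset.image Φ Finset.univ with hVf
      have hVfcard : Vf.card = p ^ 2 := by
        rw [hVf, Finset.card_image_of_injective _ hΦinj, Finset.card_univ,
          Fintype.card_prod, ZMod.card, pow_two]
      have h0V : (0 : Matrix (Fin 2) (Fin 2) (ZMod p)) ∈ Vf := by
        rw [hVf]
        exact Finset.mem_image.2 ⟨(0, 0), Finset.mem_univ _, by simp [hΦ]⟩
      have hWcard : (Vf.erase 0).card = p ^ 2 - 1 := by
        rw [Finset.card_erase_of_mem h0V, hVfcard]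
      have hTW : T ⊆ Vf.erase 0 := by
        intro x hx
        rw [hT, Finset.mem_image] at hx
        obtain ⟨i, _, rfl⟩ := hx
        refine Finset.mem_erase.2 ⟨?_, ?_⟩
        · exact (hMU.mul (hMU.pow _)).ne_zero
        · obtain ⟨a', b', hab'⟩ := pow_mem_span M ((i : ℕ) + 1)
          refine Finset.mem_image.2 ⟨(a', b'), Finset.mem_univ _, ?_⟩
          show a' • 1 + b' • M = M * M ^ (i : ℕ)
          rw [show M * M ^ (i : ℕ) = M ^ ((i : ℕ) + 1) from (pow_succ' M _).symm, hab']
      have hTeqW : T = Vf.erase 0 := Finset.eq_of_subset_of_card_le hTW (by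
        rw [hTcard, hWcard])
      have hNW : Φ (a, b) ∈ Vf.erase 0 :=
        Finset.mem_erase.2 ⟨hN0, Finset.mem_image.2 ⟨(a, b), Finset.mem_univ _, rfl⟩⟩
      rw [← hTeqW, hT, Finset.mem_image] at hNW
      obtain ⟨i, _, hi⟩ := hNW
      refine ⟨(i : ℕ) + 1, by omega, by have := i.isLt; omega, ?_⟩
      show (M ^ ((i : ℕ) + 1)) *ᵥ v = w
      rw [pow_succ' M _, hi]
      exact hab
end

section
/- Let p ≥ 3 be a prime, s ≥ 1, and M a 2×2 integer matrix with order p²−1 mod p such that M^(p²−1) = pA + I with the (1,2)-entry of A not divisible by p. Suppose l, l′ ∈ {0,…,p^s−1} are integers not divisible by p with l ≡ l′ (mod p), and suppose there exists 1 ≤ k ≤ (p²−1)p^(s−1) with M^k·(p^(s−1), l)ᵗ ≡ (p^(s−1), l′)ᵗ (mod p^s ℤ²). Then k = (p²−1)p^(s−1) and l = l′. -/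
open Polynomial

lemma aux_sum_mulVec {n : Type*} [Fintype n] {ι : Type*} (s : Finset ι)
    (f : ι → Matrix n n ℤ) (v : n → ℤ) :
    (∑ j ∈ s, f j).mulVec v = ∑ j ∈ s, (f j).mulVec v := by
  classical
  induction s using Finset.induction_on with
  | empty => simp [Matrix.zero_mulVec]
  | insert a t h ih =>
    rw [Finset.sum_insert h, Finset.sum_insert h, Matrix.add_mulVec, ih]

lemma aux_expand (p m : ℕ) (A : Matrix (Fin 2) (Fin 2) ℤ) :
    ((p : ℤ) • A + 1) ^ m
      = ∑ j ∈ Finset.range (m + 1), ((m.choose j : ℤ) * (p : ℤ) ^ j) • A ^ j := by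
  rw [(Commute.one_right ((p : ℤ) • A)).add_pow m]
  refine Finset.sum_congr rfl fun j hj => ?_
  rw [one_pow, mul_one, _root_.smul_pow]
  rw [(Nat.cast_commute (m.choose j) ((p : ℤ) ^ j • A ^ j)).eq.symm]
  rw [← nsmul_eq_mul, Nat.cast_smul_eq_nsmul ℤ (m.choose j) (((p : ℤ) ^ j) • A ^ j) |>.symm]
  rw [smul_smul]

lemma stepA (p : ℕ) (hp : p.Prime) (N : Matrix (Fin 2) (Fin 2) (ZMod p))
    (hord : ∀ j : ℕ, 0 < j → N ^ j = 1 → p ^ 2 - 1 ≤ j) (hone : N ^ (p ^ 2 - 1) = 1)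
    (k : ℕ) (w : Fin 2 → ZMod p) (hw : w ≠ 0) (hfix : (N ^ k).mulVec w = w) :
    (p ^ 2 - 1) ∣ k := by
  haveI : Fact p.Prime := ⟨hp⟩
  have hp2 : 2 ≤ p := hp.two_le
  have hp4 : 4 ≤ p ^ 2 := by nlinarith
  set χ := N.charpoly with hχ
  have hCH : (Polynomial.aeval N) χ = 0 := Matrix.aeval_self_charpoly N
  have heq : p ^ 2 - 2 + 1 = p ^ 2 - 1 := by omega
  have hNunit : IsUnit N := by
    refine isUnit_iff_exists.mpr ⟨N ^ (p ^ 2 - 2), ?_, ?_⟩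
    · rw [← pow_succ', heq, hone]
    · rw [← pow_succ, heq, hone]
  have hdet : N.det ≠ 0 := ((Matrix.isUnit_iff_isUnit_det N).mp hNunit).ne_zero
  have hdeg : χ.natDegree = 2 := by
    rw [hχ, Matrix.charpoly_natDegree_eq_dim, Fintype.card_fin]
  have hmon : χ.Monic := N.charpoly_monic
  have hc0 : χ.coeff 0 ≠ 0 := by
    intro h
    apply hdet
    rw [Matrix.det_eq_sign_charpoly_coeff, h, mul_zero]
  -- the big power identity: if N has a root a, then N ^ ((p-1)*p) = 1, contradiction
  have hroot : ∀ a : ZMod p, ¬ χ.IsRoot a := by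
    intro a ha
    have ha0 : a ≠ 0 := by
      rintro rfl
      exact hc0 (by rwa [coeff_zero_eq_eval_zero])
    obtain ⟨q, hq⟩ : (X - C a) ∣ χ := dvd_iff_isRoot.mpr ha
    have hqmon : q.Monic := (monic_X_sub_C a).of_mul_monic_left (hq ▸ hmon)
    have hqdeg : q.natDegree = 1 := by
      have h2 := hdeg
      rw [hq, natDegree_mul (X_sub_C_ne_zero a) hqmon.ne_zero, natDegree_X_sub_C] at h2
      omega
    have hqform : q = X + C (q.coeff 0) := hqmon.eq_X_add_C hqdeg
    set b : ZMod p := -(q.coeff 0) with hb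
    have hqb : q = X - C b := by rw [hqform, hb, map_neg, sub_neg_eq_add]
    have hb0 : b ≠ 0 := by
      rintro h
      apply hc0
      rw [coeff_zero_eq_eval_zero, hq, hqb, h, map_zero, sub_zero, eval_mul, eval_X, mul_zero]
    set f : (ZMod p)[X] := X ^ (p - 1) - 1 with hf
    have hfa : (X - C a) ∣ f := by
      apply dvd_iff_isRoot.mpr
      simp [hf, IsRoot, ZMod.pow_card_sub_one_eq_one ha0]
    have hfb : (X - C b) ∣ f := by
      apply dvd_iff_isRoot.mpr
      simp [hf, IsRoot, ZMod.pow_card_sub_one_eq_one hb0]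
    have hχff : χ ∣ f ^ p := by
      have h2 : χ ∣ f * f := by
        rw [hq, hqb]; exact mul_dvd_mul hfa hfb
      refine h2.trans ?_
      have : f ^ p = f * f * f ^ (p - 2) := by
        rw [← pow_two, ← pow_add]
        congr 1
        omega
      rw [this]
      exact Dvd.intro _ rfl
    have hfp : f ^ p = X ^ ((p - 1) * p) - 1 := by
      rw [hf, sub_pow_char, ← pow_mul, one_pow]
    obtain ⟨g, hg⟩ := hχff
    have hN1 : N ^ ((p - 1) * p) - 1 = 0 := by
      have := congrArg (Polynomial.aeval N) hg
      rw [map_mul, hCH, zero_mul, hfp, map_sub, map_pow, aeval_X, map_one] at this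
      exact this
    have hle := hord ((p - 1) * p) (Nat.mul_pos (by omega) (by omega))
      (by rwa [sub_eq_zero] at hN1)
    have h5 : (p - 1) * p = p ^ 2 - p := by rw [Nat.sub_mul, one_mul, ← pow_two]
    omega
  have hirr : Irreducible χ := by
    rw [hmon.irreducible_iff_roots_eq_zero_of_degree_le_three (by omega) (by omega)]
    rw [Multiset.eq_zero_iff_forall_notMem]
    intro a ha
    exact hroot a ((mem_roots hmon.ne_zero).mp ha)
  -- N ^ k = 1
  set g : (ZMod p)[X] := X ^ k - 1 with hg
  have haevg : Polynomial.aeval N g = N ^ k - 1 := by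
    rw [hg, map_sub, map_pow, aeval_X, map_one]
  have hNk : N ^ k = 1 := by
    rcases hirr.isCoprime_or_dvd g with hcop | hdvd
    swap
    · obtain ⟨c, hc⟩ := hdvd
      have := congrArg (Polynomial.aeval N) hc
      rw [map_mul, hCH, zero_mul, haevg] at this
      rwa [sub_eq_zero] at this
    exfalso
    obtain ⟨u, v, huv⟩ := hcop
    have hvg := congrArg (Polynomial.aeval N) huv
    rw [map_add, map_mul, map_mul, hCH, mul_zero, zero_add, map_one, haevg] at hvg
    have hgv : (N ^ k - 1) * Polynomial.aeval N v = 1 := by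
      rw [← haevg, ← map_mul, mul_comm, map_mul, haevg, hvg]
    have hw0 : (N ^ k - 1).mulVec w = 0 := by
      rw [Matrix.sub_mulVec, hfix, Matrix.one_mulVec, sub_self]
    apply hw
    calc w = (1 : Matrix (Fin 2) (Fin 2) (ZMod p)).mulVec w := (Matrix.one_mulVec w).symm
      _ = (Polynomial.aeval N v).mulVec ((N ^ k - 1).mulVec w) := by
          rw [Matrix.mulVec_mulVec, hvg]
      _ = 0 := by rw [hw0, Matrix.mulVec_zero]
  -- order
  have hpos : 0 < p ^ 2 - 1 := by omega
  have hfin : IsOfFinOrder N := isOfFinOrder_iff_pow_eq_one.mpr ⟨p ^ 2 - 1, hpos, hone⟩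
  have hord1 : orderOf N = p ^ 2 - 1 := by
    refine le_antisymm (Nat.le_of_dvd hpos (orderOf_dvd_of_pow_eq_one hone)) ?_
    exact hord _ (orderOf_pos_iff.mpr hfin) (pow_orderOf_eq_one N)
  rw [← hord1]
  exact orderOf_dvd_of_pow_eq_one hNk

lemma aux_three_pow (u : ℕ) (hu : 1 ≤ u) : u + 2 ≤ 3 ^ u := by
  induction u with
  | zero => omega
  | succ n ih =>
    rcases Nat.eq_or_lt_of_le hu with h | h
    · simp [← h]
    · have h3 : 3 ^ n ≤ 3 ^ (n + 1) := Nat.pow_le_pow_right (by norm_num) (by omega)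
      have := ih (by omega)
      omega

lemma aux_choose_dvd (p : ℕ) (hp : p.Prime) (m j t : ℕ) (hj : 1 ≤ j)
    (ht : p ^ t ∣ m) : p ^ (t - (j.factorization p)) ∣ Nat.choose m j := by
  rcases Nat.eq_zero_or_pos m with rfl | hm
  · rw [Nat.choose_eq_zero_of_lt hj]
    exact dvd_zero _
  set u := j.factorization p with hu
  rcases le_or_gt t u with h | h
  · rw [Nat.sub_eq_zero_of_le h, pow_zero]; exact one_dvd _
  have hid : m * Nat.choose (m - 1) (j - 1) = Nat.choose m j * j := by
    have := Nat.add_one_mul_choose_eq (m - 1) (j - 1)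
    rwa [Nat.sub_add_cancel hm,
      Nat.sub_add_cancel hj] at this
  have h1 : p ^ t ∣ Nat.choose m j * j := hid ▸ (ht.mul_right _)
  have hj0 : j ≠ 0 := by omega
  have hj2 : j = p ^ u * (j / p ^ u) := (Nat.ordProj_mul_ordCompl_eq_self j p).symm
  have hcop : Nat.Coprime (p ^ t) (j / p ^ u) :=
    Nat.Coprime.pow_left _ ((Nat.Prime.coprime_iff_not_dvd hp).mpr
      (Nat.not_dvd_ordCompl hp hj0))
  have h2 : p ^ t ∣ Nat.choose m j * p ^ u := by
    refine hcop.dvd_of_dvd_mul_right ?_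
    rw [mul_assoc, ← hj2]
    exact h1
  have h3 : p ^ (t - u) * p ^ u ∣ Nat.choose m j * p ^ u := by
    rwa [← pow_add, Nat.sub_add_cancel (le_of_lt h)]
  exact (Nat.mul_dvd_mul_iff_right (Nat.pow_pos (n := u) hp.pos)).mp h3

lemma aux_keyD (p : ℕ) (hp : p.Prime) (hp3 : 3 ≤ p) (m t r j : ℕ)
    (ht : p ^ t ∣ m) (hr : r ≤ 2) (hrj : r ≤ j) (hj : 1 ≤ j) :
    p ^ (t + r) ∣ Nat.choose m j * p ^ j := by
  set u := j.factorization p with hu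
  have hpu : p ^ u ∣ j := Nat.ordProj_dvd j p
  have hpuj : p ^ u ≤ j := Nat.le_of_dvd (by omega) hpu
  have hur : u + r ≤ j := by
    rcases Nat.eq_zero_or_pos u with h0 | h0
    · omega
    · have h1 : 3 ^ u ≤ p ^ u := Nat.pow_le_pow_left hp3 u
      have h2 := aux_three_pow u h0
      omega
  rcases le_or_gt u t with h | h
  · have h1 : p ^ (t - u) ∣ Nat.choose m j := aux_choose_dvd p hp m j t hj ht
    have h2 : p ^ (u + r) ∣ p ^ j := pow_dvd_pow _ hur
    have := mul_dvd_mul h1 h2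
    have he : t - u + (u + r) = t + r := by omega
    rwa [← pow_add, he] at this
  · have h2 : p ^ (t + r) ∣ p ^ j := pow_dvd_pow _ (by omega)
    exact h2.mul_left _

lemma aux_map_zero_iff (p : ℕ) (X : Matrix (Fin 2) (Fin 2) ℤ) :
    (Int.castRingHom (ZMod p)).mapMatrix X = 0 ↔ ∀ i j : Fin 2, (p : ℤ) ∣ X i j := by
  constructor
  · intro h i j
    have h1 : (Int.castRingHom (ZMod p)).mapMatrix X i j = 0 := by rw [h]; rfl
    rw [RingHom.mapMatrix_apply, Matrix.map_apply] at h1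
    exact (ZMod.intCast_zmod_eq_zero_iff_dvd _ p).mp h1
  · intro h
    ext i j
    rw [RingHom.mapMatrix_apply, Matrix.map_apply]
    exact (ZMod.intCast_zmod_eq_zero_iff_dvd _ p).mpr (h i j)

set_option maxHeartbeats 1600000 in
theorem claim1_orbit_return
    (p : ℕ) (hp : p.Prime) (hp3 : 3 ≤ p) (s : ℕ) (hs : 1 ≤ s)
    (M A : Matrix (Fin 2) (Fin 2) ℤ)
    (hord : IsLeast {k : ℕ | 0 < k ∧ ∀ i j : Fin 2, (p : ℤ) ∣ ((M ^ k - 1) i j)}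
      (p ^ 2 - 1))
    (hM : M ^ (p ^ 2 - 1) = (p : ℤ) • A + 1)
    (hA : ¬ (p : ℤ) ∣ A 0 1)
    (l l' : ℤ) (hl0 : 0 ≤ l) (hl1 : l < (p : ℤ) ^ s)
    (hl0' : 0 ≤ l') (hl1' : l' < (p : ℤ) ^ s)
    (hpl : ¬ (p : ℤ) ∣ l) (hpl' : ¬ (p : ℤ) ∣ l')
    (hll' : (p : ℤ) ∣ (l - l'))
    (k : ℕ) (hk1 : 1 ≤ k) (hk2 : k ≤ (p ^ 2 - 1) * p ^ (s - 1))
    (horb : ∀ i : Fin 2,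
      (p : ℤ) ^ s ∣ ((M ^ k).mulVec ![(p : ℤ) ^ (s - 1), l] i - ![(p : ℤ) ^ (s - 1), l'] i)) :
    k = (p ^ 2 - 1) * p ^ (s - 1) ∧ l = l' := by
  haveI : Fact p.Prime := ⟨hp⟩
  have hp2 : 2 ≤ p := hp.two_le
  have hpp : p ^ 2 = p * p := sq p
  have h9 : 9 ≤ p * p := Nat.mul_le_mul hp3 hp3
  have hP1 : 0 < p ^ 2 - 1 := by omega
  set v : Fin 2 → ℤ := ![(p : ℤ) ^ (s - 1), l] with hv
  set v' : Fin 2 → ℤ := ![(p : ℤ) ^ (s - 1), l'] with hv'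
  set f := Int.castRingHom (ZMod p) with hf
  set N := f.mapMatrix M with hN
  have hmapow : ∀ j : ℕ, f.mapMatrix (M ^ j) = N ^ j := fun j => map_pow f.mapMatrix M j
  have honeN : N ^ (p ^ 2 - 1) = 1 := by
    have h0 : f.mapMatrix (M ^ (p ^ 2 - 1) - 1) = 0 := (aux_map_zero_iff p _).mpr hord.1.2
    rw [map_sub, map_one, hmapow, sub_eq_zero] at h0
    exact h0
  have hordN : ∀ j : ℕ, 0 < j → N ^ j = 1 → p ^ 2 - 1 ≤ j := by
    intro j hj h1
    refine hord.2 ⟨hj, ?_⟩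
    apply (aux_map_zero_iff p _).mp
    rw [map_sub, map_one, hmapow, h1, sub_self]
  set wv : Fin 2 → ZMod p := ⇑f ∘ v with hwv
  have hwvne : wv ≠ 0 := by
    intro h
    have h1 : wv 1 = 0 := by rw [h]; rfl
    rw [hwv] at h1
    simp only [Function.comp_apply, hv, Matrix.cons_val_one, Matrix.head_cons, hf,
      Int.coe_castRingHom] at h1
    exact hpl ((ZMod.intCast_zmod_eq_zero_iff_dvd _ p).mp h1)
  have hfixN : (N ^ k).mulVec wv = wv := by
    funext i
    have h1 : ((N ^ k).mulVec wv) i = f ((M ^ k).mulVec v i) := by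
      rw [← hmapow k, RingHom.mapMatrix_apply]
      exact (RingHom.map_mulVec f (M ^ k) v i).symm
    have h2 : f ((M ^ k).mulVec v i - v' i) = 0 := by
      rw [hf, Int.coe_castRingHom]
      apply (ZMod.intCast_zmod_eq_zero_iff_dvd _ p).mpr
      exact dvd_trans (dvd_pow_self (p : ℤ) (by omega)) (horb i)
    rw [map_sub, sub_eq_zero] at h2
    have h3 : f (v' i) = f (v i) := by
      fin_cases i
      · rfl
      · show f l' = f l
        have h4 : f (l - l') = 0 := by
          rw [hf, Int.coe_castRingHom]
          exact (ZMod.intCast_zmod_eq_zero_iff_dvd _ p).mpr hll'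
        rw [map_sub, sub_eq_zero] at h4
        exact h4.symm
    rw [h1, h2, h3]
    rfl
  obtain ⟨m, hkm⟩ := stepA p hp N hordN honeN k wv hwvne hfixN
  have hm1 : 1 ≤ m := by
    rcases Nat.eq_zero_or_pos m with rfl | h
    · omega
    · exact h
  have hmle : m ≤ p ^ (s - 1) := by
    rw [hkm] at hk2
    exact Nat.le_of_mul_le_mul_left hk2 hP1
  have hMk : M ^ k = ∑ j ∈ Finset.range (m + 1),
      ((m.choose j : ℤ) * (p : ℤ) ^ j) • A ^ j := by
    rw [hkm, pow_mul, hM, aux_expand]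
  have hMkv : ∀ i : Fin 2, (M ^ k).mulVec v i
      = v i + ∑ j ∈ Finset.range m,
        ((m.choose (j + 1) : ℤ) * (p : ℤ) ^ (j + 1)) * ((A ^ (j + 1)).mulVec v i) := by
    intro i
    rw [hMk, aux_sum_mulVec]
    rw [Finset.sum_apply]
    simp only [Matrix.smul_mulVec, Pi.smul_apply, smul_eq_mul]
    rw [Finset.sum_range_succ']
    simp only [pow_zero, pow_one, Nat.choose_zero_right, Nat.cast_one, one_mul, mul_one,
      Matrix.one_mulVec]
    ring
  have horb0 : (p : ℤ) ^ s ∣ ∑ j ∈ Finset.range m,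
      ((m.choose (j + 1) : ℤ) * (p : ℤ) ^ (j + 1)) * ((A ^ (j + 1)).mulVec v 0) := by
    have h1 := horb 0
    rw [hMkv 0] at h1
    have hvv : v' 0 = v 0 := rfl
    rw [hvv] at h1
    simpa using h1
  have hdvd_m : p ^ (s - 1) ∣ m := by
    by_contra hnd
    have hs1 : s ≠ 1 := by
      rintro rfl
      exact hnd (by simpa using (one_dvd m))
    have hs2 : 2 ≤ s := by omega
    set t := m.factorization p with htdef
    have ht : p ^ t ∣ m := Nat.ordProj_dvd m p
    have hts : t + 2 ≤ s := by
      by_contra h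
      exact hnd (dvd_trans (pow_dvd_pow p (by omega)) ht)
    have hterm : ∀ j : ℕ, 2 ≤ j → ((p : ℤ)) ^ (t + 2) ∣ (m.choose j : ℤ) * (p : ℤ) ^ j := by
      intro j hj
      have h1 := aux_keyD p hp hp3 m t 2 j ht le_rfl hj (by omega)
      have h2 := Int.natCast_dvd_natCast.mpr h1
      push_cast at h2
      exact h2
    set g : ℕ → ℤ := fun j =>
      ((m.choose (j + 1) : ℤ) * (p : ℤ) ^ (j + 1)) * ((A ^ (j + 1)).mulVec v 0) with hg
    have hsplit : (∑ j ∈ Finset.range m, g j)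
        = (∑ j ∈ Finset.range (m - 1), g (j + 1)) + g 0 := by
      have hm : m = (m - 1) + 1 := by omega
      conv_lhs => rw [hm]
      rw [Finset.sum_range_succ']
    have hdvdtail : (p : ℤ) ^ (t + 2) ∣ ∑ j ∈ Finset.range (m - 1), g (j + 1) :=
      Finset.dvd_sum fun j _ => ((hterm (j + 2) (by omega)).mul_right _)
    have hdvdS : (p : ℤ) ^ (t + 2) ∣ ∑ j ∈ Finset.range m, g j :=
      dvd_trans (pow_dvd_pow _ hts) horb0
    have hg0 : (p : ℤ) ^ (t + 2) ∣ g 0 := by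
      have h5 : g 0 = (∑ j ∈ Finset.range m, g j) - ∑ j ∈ Finset.range (m - 1), g (j + 1) := by
        rw [hsplit]; ring
      rw [h5]
      exact dvd_sub hdvdS hdvdtail
    have hw01 : (A ^ 1).mulVec v 0 = A 0 0 * (p : ℤ) ^ (s - 1) + A 0 1 * l := by
      simp [pow_one, Matrix.mulVec, dotProduct, Fin.sum_univ_two, hv]
    have hpprime : Prime ((p : ℤ)) := Nat.prime_iff_prime_int.mp hp
    have hpw : ¬ (p : ℤ) ∣ (A ^ 1).mulVec v 0 := by
      rw [hw01]
      intro hd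
      have h1 : (p : ℤ) ∣ (p : ℤ) ^ (s - 1) := dvd_pow_self _ (by omega)
      have h2 : (p : ℤ) ∣ A 0 1 * l := by
        have h3 := dvd_sub hd (h1.mul_left (A 0 0))
        simpa using h3
      rcases hpprime.dvd_mul.mp h2 with h | h
      · exact hA h
      · exact hpl h
    set m' := m / p ^ t with hm'def
    have hmm : m = p ^ t * m' := (Nat.ordProj_mul_ordCompl_eq_self m p).symm
    have hpm' : ¬ (p : ℤ) ∣ (m' : ℤ) := by
      rw [Int.natCast_dvd_natCast]
      exact Nat.not_dvd_ordCompl hp (by omega)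
    have hg0' : g 0 = (p : ℤ) ^ (t + 1) * ((m' : ℤ) * ((A ^ 1).mulVec v 0)) := by
      rw [hg]
      simp only [Nat.choose_one_right, pow_one, zero_add]
      rw [hmm]
      push_cast
      ring
    rw [hg0'] at hg0
    have hcancel : (p : ℤ) ∣ (m' : ℤ) * ((A ^ 1).mulVec v 0) := by
      have hne : ((p : ℤ) ^ (t + 1)) ≠ 0 := by positivity
      have he : (p : ℤ) ^ (t + 2) = (p : ℤ) ^ (t + 1) * (p : ℤ) := by rw [← pow_succ]
      rw [he] at hg0
      exact (mul_dvd_mul_iff_left hne).mp hg0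
    rcases hpprime.dvd_mul.mp hcancel with h | h
    · exact hpm' h
    · exact hpw h
  have hm_eq : m = p ^ (s - 1) := le_antisymm hmle (Nat.le_of_dvd (by omega) hdvd_m)
  have hkeq : k = (p ^ 2 - 1) * p ^ (s - 1) := by rw [hkm, hm_eq]
  refine ⟨hkeq, ?_⟩
  have hcoef : ∀ j : ℕ, 1 ≤ j → (p : ℤ) ^ s ∣ (m.choose j : ℤ) * (p : ℤ) ^ j := by
    intro j hj
    have h1 := aux_keyD p hp hp3 m (s - 1) 1 j (hm_eq ▸ dvd_refl _) (by omega) hj hj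
    have he : s - 1 + 1 = s := by omega
    rw [he] at h1
    have h2 := Int.natCast_dvd_natCast.mpr h1
    push_cast at h2
    exact h2
  have hsecond : (p : ℤ) ^ s ∣ (M ^ k).mulVec v 1 - v 1 := by
    rw [hMkv 1]
    have h5 : v 1 + (∑ j ∈ Finset.range m,
        ((m.choose (j + 1) : ℤ) * (p : ℤ) ^ (j + 1)) * ((A ^ (j + 1)).mulVec v 1)) - v 1
        = ∑ j ∈ Finset.range m,
        ((m.choose (j + 1) : ℤ) * (p : ℤ) ^ (j + 1)) * ((A ^ (j + 1)).mulVec v 1) := by ring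
    rw [h5]
    exact Finset.dvd_sum fun j _ => ((hcoef (j + 1) (by omega)).mul_right _)
  have hll : (p : ℤ) ^ s ∣ l - l' := by
    have h1 := horb 1
    have h2 := dvd_sub h1 hsecond
    have h3 : ((M ^ k).mulVec v 1 - v' 1) - ((M ^ k).mulVec v 1 - v 1) = l - l' := by
      show _ - _ - (_ - _) = _
      have hv1 : v 1 = l := rfl
      have hv1' : v' 1 = l' := rfl
      rw [hv1, hv1']
      ring
    rwa [h3] at h2
  obtain ⟨c, hc⟩ := hll
  have hps : 0 < (p : ℤ) ^ s := by positivity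
  have hcz : c = 0 := by
    rcases lt_trichotomy c 0 with h | h | h
    · nlinarith
    · exact h
    · nlinarith
  rw [hcz, mul_zero] at hc
  linarith
end

section
/- Let p ≥ 3 be a prime, s ≥ 1, and M a 2×2 integer matrix whose order mod p is p²−1 and with M^(p²−1) = pA + I where the (1,2)-entry of A is not divisible by p. Then for every integer l with 0 ≤ l ≤ p^s−1 and p ∤ l, the orbit {M^j·(p^(s−1), l)ᵗ (mod p^s ℤ²) : 1 ≤ j ≤ (p²−1)p^(s−1)} consists of exactly (p²−1)·p^(s−1) distinct elements of (ℤ/p^sℤ)². -/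
/-- Cayley–Hamilton for 2×2 matrices, by direct computation. -/
lemma cayley2 {R : Type*} [CommRing R] (N : Matrix (Fin 2) (Fin 2) R) :
    N ^ 2 = (N 0 0 + N 1 1) • N - (N 0 0 * N 1 1 - N 0 1 * N 1 0) • (1 : Matrix (Fin 2) (Fin 2) R) := by
  ext i j
  simp [pow_two, Matrix.mul_apply, Fin.sum_univ_two, Matrix.one_apply, Matrix.smul_apply]
  fin_cases i <;> fin_cases j <;> simp <;> ring

/-- Two kernel vectors of a nonzero singular 2×2 matrix over a field are dependent. -/
lemma ker_dep {F : Type*} [Field F] (C : Matrix (Fin 2) (Fin 2) F) (x y : Fin 2 → F)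
    (hC : C ≠ 0) (hx : C.mulVec x = 0) (hy : C.mulVec y = 0) :
    x 0 * y 1 = x 1 * y 0 := by
  by_contra h
  apply hC
  have hx0 := congrFun hx 0
  have hx1 := congrFun hx 1
  have hy0 := congrFun hy 0
  have hy1 := congrFun hy 1
  simp [Matrix.mulVec, dotProduct, Fin.sum_univ_two] at hx0 hx1 hy0 hy1
  have hd : x 0 * y 1 - x 1 * y 0 ≠ 0 := sub_ne_zero.mpr h
  ext i j
  fin_cases i <;> fin_cases j <;> simp
  · have : C 0 0 * (x 0 * y 1 - x 1 * y 0) = 0 := by linear_combination y 1 * hx0 - x 1 * hy0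
    exact (mul_eq_zero.mp this).resolve_right hd
  · have : C 0 1 * (x 0 * y 1 - x 1 * y 0) = 0 := by linear_combination x 0 * hy0 - y 0 * hx0
    exact (mul_eq_zero.mp this).resolve_right hd
  · have : C 1 0 * (x 0 * y 1 - x 1 * y 0) = 0 := by linear_combination y 1 * hx1 - x 1 * hy1
    exact (mul_eq_zero.mp this).resolve_right hd
  · have : C 1 1 * (x 0 * y 1 - x 1 * y 0) = 0 := by linear_combination x 0 * hy1 - y 0 * hx1
    exact (mul_eq_zero.mp this).resolve_right hd

/-- A nonzero singular mulVec kernel: if C.mulVec w = 0 with w ≠ 0 then parallel vectors. -/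
lemma exists_eigen {F : Type*} [Field F] (Mq : Matrix (Fin 2) (Fin 2) F) (w : Fin 2 → F)
    (hw : w ≠ 0) (hdep : w 0 * (Mq.mulVec w) 1 = w 1 * (Mq.mulVec w) 0) :
    ∃ c : F, Mq.mulVec w = c • w := by
  by_cases h0 : w 0 ≠ 0
  · refine ⟨(Mq.mulVec w) 0 / w 0, ?_⟩
    funext i
    fin_cases i
    · simp; field_simp
    · show Mq.mulVec w 1 = Mq.mulVec w 0 / w 0 * w 1
      rw [div_mul_eq_mul_div, eq_div_iff h0]
      linear_combination hdep
  · push_neg at h0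
    have h1 : w 1 ≠ 0 := by
      intro h1
      apply hw
      funext i; fin_cases i <;> simp [h0, h1]
    refine ⟨(Mq.mulVec w) 1 / w 1, ?_⟩
    funext i
    fin_cases i
    · show Mq.mulVec w 0 = Mq.mulVec w 1 / w 1 * w 0
      rw [div_mul_eq_mul_div, eq_div_iff h1]
      linear_combination -hdep
    · simp; field_simp


lemma no_eigen (p : ℕ) (hp : p.Prime) (hp3 : 3 ≤ p)
    (Mq : Matrix (Fin 2) (Fin 2) (ZMod p))
    (hn : Mq ^ (p ^ 2 - 1) = 1)
    (hmin : ∀ k, 0 < k → k < p ^ 2 - 1 → Mq ^ k ≠ 1)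
    (w : Fin 2 → ZMod p) (hw : w ≠ 0) (c : ZMod p)
    (heig : Mq.mulVec w = c • w) : False := by
  haveI : Fact p.Prime := ⟨hp⟩
  obtain ⟨i0, hi0⟩ := Function.ne_iff.mp hw
  have hi0' : w i0 ≠ 0 := by simpa using hi0
  have h1p : 1 ≤ p := by omega
  have h1p2 : 1 ≤ p ^ 2 := Nat.one_le_pow 2 p (by omega)
  have hp3' : (3 : ℤ) ≤ (p : ℤ) := by exact_mod_cast hp3
  have npos : 0 < p ^ 2 - 1 := by zify [h1p2]; nlinarith
  have hlt1 : p - 1 < p ^ 2 - 1 := by zify [h1p, h1p2]; nlinarith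
  have hlt2 : p * (p - 1) < p ^ 2 - 1 := by zify [h1p, h1p2]; nlinarith
  have powEig : ∀ m : ℕ, (Mq ^ m).mulVec w = c ^ m • w := by
    intro m
    induction m with
    | zero => simp [Matrix.one_mulVec]
    | succ m ih =>
      rw [pow_succ', ← Matrix.mulVec_mulVec, ih, Matrix.mulVec_smul, heig,
        smul_smul, ← pow_succ]
  have scal : ∀ a b : ZMod p, a • w = b • w → a = b := by
    intro a b hab
    have h1 := congrFun hab i0
    simp only [Pi.smul_apply, smul_eq_mul] at h1
    have h2 : (a - b) * w i0 = 0 := by linear_combination h1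
    rcases mul_eq_zero.mp h2 with h | h
    · exact sub_eq_zero.mp h
    · exact absurd h hi0'
  have cn1 : c ^ (p ^ 2 - 1) = 1 := by
    have h1 := powEig (p ^ 2 - 1)
    rw [hn, Matrix.one_mulVec] at h1
    exact (scal 1 (c ^ (p ^ 2 - 1)) (by rw [← h1, one_smul])).symm
  have hc : c ≠ 0 := by
    intro h
    rw [h, zero_pow npos.ne'] at cn1
    exact zero_ne_one cn1
  have hcayley : Mq ^ 2 = (Mq 0 0 + Mq 1 1) • Mq
      - (Mq 0 0 * Mq 1 1 - Mq 0 1 * Mq 1 0) • 1 := cayley2 Mq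
  have hquad : c ^ 2 = (Mq 0 0 + Mq 1 1) * c - (Mq 0 0 * Mq 1 1 - Mq 0 1 * Mq 1 0) := by
    have h2 : (Mq ^ 2).mulVec w = c ^ 2 • w := powEig 2
    rw [hcayley, Matrix.sub_mulVec, Matrix.smul_mulVec, Matrix.smul_mulVec,
      heig, Matrix.one_mulVec, smul_smul, ← sub_smul] at h2
    exact (scal _ _ h2).symm
  set c' : ZMod p := (Mq 0 0 + Mq 1 1) - c with hc'def
  have hδ : Mq 0 0 * Mq 1 1 - Mq 0 1 * Mq 1 0 = c * c' := by
    rw [hc'def]; linear_combination hquad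
  have hδne : Mq 0 0 * Mq 1 1 - Mq 0 1 * Mq 1 0 ≠ 0 := by
    intro h
    have hdet : Mq.det ^ (p ^ 2 - 1) = 1 := by
      rw [← Matrix.det_pow, hn, Matrix.det_one]
    rw [Matrix.det_fin_two, h, zero_pow npos.ne'] at hdet
    exact zero_ne_one hdet
  have hc' : c' ≠ 0 := fun h => hδne (by rw [hδ, h, mul_zero])
  have cp : c ^ (p - 1) = 1 := ZMod.pow_card_sub_one_eq_one hc
  have c'p : c' ^ (p - 1) = 1 := ZMod.pow_card_sub_one_eq_one hc'
  have key : (Mq - c • 1) * (Mq - c' • 1) = 0 := by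
    rw [hc'def]
    ext i j
    fin_cases i <;> fin_cases j <;>
      simp [Matrix.mul_apply, Fin.sum_univ_two, Matrix.one_apply, Matrix.sub_apply,
        Matrix.smul_apply, smul_eq_mul] <;>
      first
        | linear_combination hquad
        | linear_combination -hquad
        | ring
  have key' : (Mq - c' • 1) * (Mq - c • 1) = 0 := by
    rw [hc'def]
    ext i j
    fin_cases i <;> fin_cases j <;>
      simp [Matrix.mul_apply, Fin.sum_univ_two, Matrix.one_apply, Matrix.sub_apply,
        Matrix.smul_apply, smul_eq_mul] <;>
      first
        | linear_combination hquad
        | linear_combination -hquad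
        | ring
  clear_value c'
  by_cases hcc : c = c'
  · -- Jordan block case
    set N' : Matrix (Fin 2) (Fin 2) (ZMod p) := Mq - c • 1 with hN'
    clear_value N'
    have hN2 : N' * N' = 0 := by nth_rewrite 2 [hN']; rw [hcc]; exact key
    have hMqN : Mq = c • 1 + N' := by rw [hN']; abel
    have powN : ∀ m : ℕ, Mq ^ (m + 1)
        = c ^ (m + 1) • 1 + (((m + 1 : ℕ) : ZMod p) * c ^ m) • N' := by
      intro m
      induction m with
      | zero => rw [pow_one, hMqN]; push_cast; module
      | succ m ih =>
        rw [pow_succ, ih, hMqN, add_mul, mul_add, mul_add]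
        simp only [smul_mul_assoc, mul_smul_comm, one_mul, mul_one, hN2, smul_zero,
          add_zero, smul_smul]
        push_cast
        module
    have hpos : 0 < p * (p - 1) := Nat.mul_pos (by omega) (by omega)
    have hpp : p * (p - 1) = (p * (p - 1) - 1) + 1 := (Nat.succ_pred_eq_of_pos hpos).symm
    have hMone : Mq ^ (p * (p - 1)) = 1 := by
      rw [hpp, powN, ← hpp]
      have h1 : c ^ (p * (p - 1)) = 1 := by rw [mul_comm, pow_mul, cp, one_pow]
      have h2 : ((p * (p - 1) : ℕ) : ZMod p) = 0 := by
        push_cast [ZMod.natCast_self]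
        ring
      rw [h1, h2, zero_mul, zero_smul, add_zero, one_smul]
    exact hmin _ hpos hlt2 hMone
  · -- distinct eigenvalues case
    have he : c - c' ≠ 0 := sub_ne_zero.mpr hcc
    set P : Matrix (Fin 2) (Fin 2) (ZMod p) := (c - c')⁻¹ • (Mq - c' • 1) with hP
    set Q : Matrix (Fin 2) (Fin 2) (ZMod p) := (c - c')⁻¹ • (c • 1 - Mq) with hQ
    clear_value P Q
    have hPQ : P + Q = 1 := by
      rw [hP, hQ, ← smul_add]
      have h3 : (Mq - c' • 1) + (c • 1 - Mq) = (c - c') • 1 := by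
        rw [sub_smul]; abel
      rw [h3, smul_smul, inv_mul_cancel₀ he, one_smul]
    have hMP0 : Mq * (Mq - c' • 1) = c • (Mq - c' • 1) := by
      have h0 := key
      rw [sub_mul, sub_eq_zero] at h0
      rw [h0, smul_mul_assoc, one_mul]
    have hMQ0 : Mq * (Mq - c • 1) = c' • (Mq - c • 1) := by
      have h0 := key'
      rw [sub_mul, sub_eq_zero] at h0
      rw [h0, smul_mul_assoc, one_mul]
    have hMP : Mq * P = c • P := by
      rw [hP, mul_smul_comm, hMP0, smul_comm]
    have hMQ : Mq * Q = c' • Q := by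
      rw [hQ, mul_smul_comm, ← neg_sub Mq (c • 1), mul_neg, hMQ0, ← smul_neg, smul_comm]
    have powPQ : ∀ m : ℕ, Mq ^ m = c ^ m • P + c' ^ m • Q := by
      intro m
      induction m with
      | zero => rw [pow_zero, pow_zero, pow_zero, one_smul, one_smul, hPQ]
      | succ m ih =>
        rw [pow_succ', ih, mul_add, mul_smul_comm, mul_smul_comm, hMP, hMQ,
          smul_smul, smul_smul, ← pow_succ, ← pow_succ]
    have hMone : Mq ^ (p - 1) = 1 := by
      rw [powPQ, cp, c'p, one_smul, one_smul, hPQ]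
    exact hmin _ (by omega) hlt1 hMone


lemma fixed_dvd (p : ℕ) (hp : p.Prime) (hp3 : 3 ≤ p)
    (Mq : Matrix (Fin 2) (Fin 2) (ZMod p))
    (hn : Mq ^ (p ^ 2 - 1) = 1)
    (hmin : ∀ k, 0 < k → k < p ^ 2 - 1 → Mq ^ k ≠ 1)
    (w : Fin 2 → ZMod p) (hw : w ≠ 0) (k : ℕ)
    (hfix : (Mq ^ k).mulVec w = w) : (p ^ 2 - 1) ∣ k := by
  haveI : Fact p.Prime := ⟨hp⟩
  set n : ℕ := p ^ 2 - 1 with hn'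
  have h1p2 : 1 ≤ p ^ 2 := Nat.one_le_pow 2 p (by omega)
  have hp3' : (3 : ℤ) ≤ (p : ℤ) := by exact_mod_cast hp3
  have npos : 0 < n := by rw [hn']; zify [h1p2]; nlinarith
  rcases Nat.eq_zero_or_pos k with rfl | kpos
  · exact dvd_zero n
  -- build the unit
  have hmulinv : Mq * Mq ^ (n - 1) = 1 := by
    rw [← pow_succ']
    have : n - 1 + 1 = n := by omega
    rw [this, hn]
  have hinvmul : Mq ^ (n - 1) * Mq = 1 := by
    rw [← pow_succ]
    have : n - 1 + 1 = n := by omega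
    rw [this, hn]
  set u : (Matrix (Fin 2) (Fin 2) (ZMod p))ˣ := ⟨Mq, Mq ^ (n - 1), hmulinv, hinvmul⟩ with hu
  have huval : (u : Matrix (Fin 2) (Fin 2) (ZMod p)) = Mq := rfl
  have fixmul : ∀ U V : (Matrix (Fin 2) (Fin 2) (ZMod p))ˣ,
      (U : Matrix (Fin 2) (Fin 2) (ZMod p)).mulVec w = w →
      (V : Matrix (Fin 2) (Fin 2) (ZMod p)).mulVec w = w →
      ((U * V : _ˣ) : Matrix (Fin 2) (Fin 2) (ZMod p)).mulVec w = w := by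
    intro U V hU hV
    rw [Units.val_mul, ← Matrix.mulVec_mulVec, hV, hU]
  have fixinv : ∀ U : (Matrix (Fin 2) (Fin 2) (ZMod p))ˣ,
      (U : Matrix (Fin 2) (Fin 2) (ZMod p)).mulVec w = w →
      ((U⁻¹ : _ˣ) : Matrix (Fin 2) (Fin 2) (ZMod p)).mulVec w = w := by
    intro U hU
    conv_lhs => rw [← hU]
    rw [Matrix.mulVec_mulVec, ← Units.val_mul, inv_mul_cancel, Units.val_one,
      Matrix.one_mulVec]
  have fixpow : ∀ (U : (Matrix (Fin 2) (Fin 2) (ZMod p))ˣ),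
      (U : Matrix (Fin 2) (Fin 2) (ZMod p)).mulVec w = w → ∀ m : ℕ,
      ((U ^ m : _ˣ) : Matrix (Fin 2) (Fin 2) (ZMod p)).mulVec w = w := by
    intro U hU m
    induction m with
    | zero => simp [Matrix.one_mulVec]
    | succ m ih => rw [pow_succ, fixmul _ _ ih hU]
  have fixzpow : ∀ (U : (Matrix (Fin 2) (Fin 2) (ZMod p))ˣ),
      (U : Matrix (Fin 2) (Fin 2) (ZMod p)).mulVec w = w → ∀ z : ℤ,
      ((U ^ z : _ˣ) : Matrix (Fin 2) (Fin 2) (ZMod p)).mulVec w = w := by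
    intro U hU z
    induction z using Int.rec with
    | ofNat m => rw [Int.ofNat_eq_coe, zpow_natCast]; exact fixpow U hU m
    | negSucc m =>
      rw [zpow_negSucc]
      exact fixinv _ (fixpow U hU (m + 1))
  -- gcd
  set g : ℕ := Nat.gcd k n with hg
  have gpos : 0 < g := Nat.gcd_pos_of_pos_right k npos
  have gdvdn : g ∣ n := Nat.gcd_dvd_right k n
  have gdvdk : g ∣ k := Nat.gcd_dvd_left k n
  have fixuk : ((u ^ (k : ℤ) : _ˣ) : Matrix (Fin 2) (Fin 2) (ZMod p)).mulVec w = w := by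
    rw [zpow_natCast]
    have : ((u ^ k : _ˣ) : Matrix (Fin 2) (Fin 2) (ZMod p)) = Mq ^ k := by
      rw [Units.val_pow_eq_pow_val, huval]
    rw [this, hfix]
  have fixun : ((u ^ (n : ℤ) : _ˣ) : Matrix (Fin 2) (Fin 2) (ZMod p)).mulVec w = w := by
    rw [zpow_natCast]
    have : ((u ^ n : _ˣ) : Matrix (Fin 2) (Fin 2) (ZMod p)) = Mq ^ n := by
      rw [Units.val_pow_eq_pow_val, huval]
    rw [this, hn, Matrix.one_mulVec]
  have fixg : (Mq ^ g).mulVec w = w := by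
    have hbez : (g : ℤ) = k * Nat.gcdA k n + n * Nat.gcdB k n := Nat.gcd_eq_gcd_ab k n
    have h1 : u ^ (g : ℤ) = (u ^ (k : ℤ)) ^ Nat.gcdA k n * (u ^ (n : ℤ)) ^ Nat.gcdB k n := by
      rw [← zpow_mul, ← zpow_mul, ← zpow_add, ← hbez]
    have h2 := fixmul _ _ (fixzpow _ fixuk (Nat.gcdA k n)) (fixzpow _ fixun (Nat.gcdB k n))
    rw [← h1] at h2
    have h3 : ((u ^ (g : ℤ) : _ˣ) : Matrix (Fin 2) (Fin 2) (ZMod p)) = Mq ^ g := by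
      rw [zpow_natCast, Units.val_pow_eq_pow_val, huval]
    rw [← h3]
    exact h2
  -- if g = n we are done
  rcases eq_or_ne g n with hgn | hgn
  · rw [← hgn]; exact gdvdk
  have hglt : g < n := lt_of_le_of_ne (Nat.le_of_dvd npos gdvdn) hgn
  -- otherwise contradiction
  exfalso
  have hB1 : Mq ^ g ≠ 1 := hmin g gpos hglt
  set C : Matrix (Fin 2) (Fin 2) (ZMod p) := Mq ^ g - 1 with hC
  have hCne : C ≠ 0 := sub_ne_zero.mpr hB1
  have hCw : C.mulVec w = 0 := by
    rw [hC, Matrix.sub_mulVec, fixg, Matrix.one_mulVec, sub_self]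
  have hcomm : C * Mq = Mq * C := by
    rw [hC, sub_mul, mul_sub, one_mul, mul_one, ← pow_succ, ← pow_succ']
  have hCMw : C.mulVec (Mq.mulVec w) = 0 := by
    rw [Matrix.mulVec_mulVec, hcomm, ← Matrix.mulVec_mulVec, hCw, Matrix.mulVec_zero]
  have hdep := ker_dep C w (Mq.mulVec w) hCne hCw hCMw
  obtain ⟨c, heig⟩ := exists_eigen Mq w hw hdep
  exact no_eigen p hp hp3 Mq hn hmin w hw c heig


lemma three_pow_ge (w : ℕ) (hw : 1 ≤ w) : w + 2 ≤ 3 ^ w := by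
  induction w with
  | zero => omega
  | succ w ih =>
    rcases Nat.eq_zero_or_pos w with rfl | hw'
    · norm_num
    · have := ih hw'
      have h3 : 3 ^ w ≥ 1 := Nat.one_le_pow _ _ (by norm_num)
      calc w + 1 + 2 ≤ 3 ^ w + 1 := by omega
        _ ≤ 3 ^ w + 3 ^ w + 3 ^ w := by omega
        _ = 3 ^ (w + 1) := by ring

lemma i_ge_w2 (p i : ℕ) (hp : p.Prime) (hp3 : 3 ≤ p) (hi : 2 ≤ i) :
    (i.factorization p) + 2 ≤ i := by
  set w := i.factorization p with hw
  rcases Nat.eq_zero_or_pos w with h0 | h1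
  · omega
  · have hdvd : p ^ w ∣ i := Nat.ordProj_dvd i p
    have hle : p ^ w ≤ i := Nat.le_of_dvd (by omega) hdvd
    have h3w : 3 ^ w ≤ p ^ w := Nat.pow_le_pow_left hp3 w
    have := three_pow_ge w h1
    omega

lemma padic_binom (p : ℕ) (hp : p.Prime) (hp3 : 3 ≤ p) (m i : ℕ) (hi : 2 ≤ i) :
    p ^ (m.factorization p + 2) ∣ Nat.choose m i * p ^ i := by
  rcases Nat.eq_zero_or_pos m with rfl | hm
  · simp [Nat.choose_eq_zero_of_lt (by omega : 0 < i)]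
  rcases Nat.lt_or_ge m i with hmi | hmi
  · simp [Nat.choose_eq_zero_of_lt hmi]
  set t := m.factorization p with ht
  set w := i.factorization p with hw
  have hiw : w + 2 ≤ i := i_ge_w2 p i hp hp3 hi
  have hident : m * Nat.choose (m - 1) (i - 1) = Nat.choose m i * i := by
    have := Nat.add_one_mul_choose_eq (m - 1) (i - 1)
    have h1 : m - 1 + 1 = m := by omega
    have h2 : i - 1 + 1 = i := by omega
    rw [h1, h2] at this
    exact this
  have hptm : p ^ t ∣ m := Nat.ordProj_dvd m p
  have hdvd1 : p ^ t ∣ Nat.choose m i * i := hident ▸ (hptm.mul_right _)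
  have hisplit : i = p ^ w * (i / p ^ w) := (Nat.ordProj_mul_ordCompl_eq_self i p).symm
  have hpi' : ¬ p ∣ i / p ^ w := Nat.not_dvd_ordCompl hp (by omega)
  have hoc : p ^ w * (i / p ^ w) = i := by rw [hw]; exact Nat.ordProj_mul_ordCompl_eq_self i p
  rcases le_or_gt w t with hwt | hwt
  · -- p^(t-w) ∣ choose m i
    have h1 : p ^ w * p ^ (t - w) ∣ p ^ w * (Nat.choose m i * (i / p ^ w)) := by
      rw [← pow_add, show w + (t - w) = t by omega, mul_left_comm, hoc]
      exact hdvd1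
    have h2 : p ^ (t - w) ∣ Nat.choose m i * (i / p ^ w) :=
      (Nat.mul_dvd_mul_iff_left (pow_pos hp.pos w)).mp h1
    have h3 : p ^ (t - w) ∣ Nat.choose m i := by
      have hcop : Nat.Coprime (p ^ (t - w)) (i / p ^ w) :=
        Nat.Coprime.pow_left _ ((Nat.Prime.coprime_iff_not_dvd hp).mpr hpi')
      exact (Nat.Coprime.dvd_of_dvd_mul_right hcop h2)
    have h4 : p ^ (t + 2) ∣ p ^ (t - w) * p ^ (w + 2) := by
      rw [← pow_add]
      apply pow_dvd_pow
      omega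
    calc p ^ (t + 2) ∣ p ^ (t - w) * p ^ (w + 2) := h4
      _ ∣ Nat.choose m i * p ^ i :=
          mul_dvd_mul h3 (pow_dvd_pow p (by omega))
  · -- w > t : p^(t+2) ∣ p^i
    have : p ^ (t + 2) ∣ p ^ i := pow_dvd_pow p (by omega)
    exact this.mul_left _

lemma sum_mulVec' {ι : Type*} (s : Finset ι) (f : ι → Matrix (Fin 2) (Fin 2) ℤ)
    (v : Fin 2 → ℤ) : (∑ i ∈ s, f i).mulVec v = ∑ i ∈ s, (f i).mulVec v := by
  ext a
  simp only [Matrix.mulVec, dotProduct, Fin.sum_univ_two, Matrix.sum_apply,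
    Finset.sum_apply, Finset.sum_mul]
  rw [Finset.sum_add_distrib]

lemma lift_contra (p : ℕ) (hp : p.Prime) (hp3 : 3 ≤ p) (s : ℕ) (hs : 1 ≤ s)
    (A : Matrix (Fin 2) (Fin 2) ℤ) (hA : ¬ (p : ℤ) ∣ A 0 1)
    (l : ℤ) (hpl : ¬ (p : ℤ) ∣ l)
    (m : ℕ) (hm : 0 < m) (hmlt : m < p ^ (s - 1))
    (hdvd : ((p : ℤ)) ^ s ∣
      ((((p : ℤ) • A + 1) ^ m).mulVec ![(p : ℤ) ^ (s - 1), l] 0 - (p : ℤ) ^ (s - 1))) :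
    False := by
  have hs2 : 2 ≤ s := by
    by_contra h
    have : s = 1 := by omega
    rw [this] at hmlt
    simp at hmlt
    omega
  set v : Fin 2 → ℤ := ![(p : ℤ) ^ (s - 1), l] with hv
  set t := m.factorization p with htdef
  have hts : t + 2 ≤ s := by
    have hns : ¬ (p ^ (s - 1) ∣ m) := fun h => by
      have := Nat.le_of_dvd hm h; omega
    have := (Nat.Prime.pow_dvd_iff_le_factorization hp (by omega : m ≠ 0)
      (k := s - 1)).not.mp hns
    omega
  have hptm : p ^ t ∣ m := Nat.ordProj_dvd m p
  have hmz : (m : ℤ) = (p : ℤ) ^ t * ((m / p ^ t : ℕ) : ℤ) := by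
    have h := Nat.ordProj_mul_ordCompl_eq_self m p
    rw [← htdef] at h
    exact_mod_cast h.symm
  set u : ℤ := ((m / p ^ t : ℕ) : ℤ) with hu
  have hpu : ¬ (p : ℤ) ∣ u := by
    rw [hu, Int.natCast_dvd_natCast]
    exact Nat.not_dvd_ordCompl hp (by omega)
  -- binomial expansion
  have expand : ((p : ℤ) • A + 1) ^ m
      = ∑ i ∈ Finset.range (m + 1), ((Nat.choose m i : ℤ) * (p : ℤ) ^ i) • A ^ i := by
    rw [Commute.add_pow (Commute.one_right ((p : ℤ) • A))]
    apply Finset.sum_congr rfl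
    intro i _
    rw [one_pow, mul_one, smul_pow, smul_mul_assoc,
      ← (Nat.cast_commute (m.choose i) (A ^ i)).eq, ← nsmul_eq_mul,
      ← Nat.cast_smul_eq_nsmul ℤ, smul_smul, mul_comm]
  have happ : (((p : ℤ) • A + 1) ^ m).mulVec v
      = ∑ i ∈ Finset.range (m + 1),
          ((Nat.choose m i : ℤ) * (p : ℤ) ^ i) • (A ^ i).mulVec v := by
    rw [expand, sum_mulVec']
    apply Finset.sum_congr rfl
    intro i _
    rw [Matrix.smul_mulVec]
  obtain ⟨m', rfl⟩ : ∃ m', m = m' + 1 := ⟨m - 1, by omega⟩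
  set g : ℕ → Fin 2 → ℤ :=
    fun i => ((Nat.choose (m' + 1) i : ℤ) * (p : ℤ) ^ i) • (A ^ i).mulVec v with hg
  have hpeel : ∑ i ∈ Finset.range (m' + 1 + 1), g i
      = (∑ i ∈ Finset.range m', g (i + 2)) + g 1 + g 0 := by
    rw [Finset.sum_range_succ' g (m' + 1), Finset.sum_range_succ' (fun i => g (i + 1)) m']
  have hg0 : g 0 = v := by
    rw [hg]
    show ((Nat.choose (m' + 1) 0 : ℤ) * (p : ℤ) ^ 0) • (A ^ 0).mulVec v = v
    rw [Nat.choose_zero_right, pow_zero, pow_zero, Nat.cast_one, mul_one, one_smul,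
      Matrix.one_mulVec]
  have hg1 : g 1 = (((m' + 1 : ℕ) : ℤ) * (p : ℤ)) • A.mulVec v := by
    rw [hg]
    simp [Nat.choose_one_right]
  -- the tail sum is divisible by p^(t+2) componentwise
  have htail : (p : ℤ) ^ (t + 2) ∣ (∑ i ∈ Finset.range m', g (i + 2)) 0 := by
    rw [Finset.sum_apply]
    apply Finset.dvd_sum
    intro i _
    rw [hg]
    simp only [Pi.smul_apply, smul_eq_mul]
    apply Dvd.dvd.mul_right
    have hnat := padic_binom p hp hp3 (m' + 1) (i + 2) (by omega)
    rw [← htdef] at hnat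
    have := Int.natCast_dvd_natCast.mpr hnat
    push_cast at this
    exact this
  -- component 0 of the fixed point equation
  have hv0 : v 0 = (p : ℤ) ^ (s - 1) := by rw [hv]; simp
  have hmain : (p : ℤ) ^ (t + 2) ∣
      (((m' + 1 : ℕ) : ℤ) * (p : ℤ)) * (A.mulVec v 0) := by
    have hdvd' : (p : ℤ) ^ (t + 2) ∣
        ((((p : ℤ) • A + 1) ^ (m' + 1)).mulVec v 0 - v 0) := by
      rw [hv0]
      exact dvd_trans (pow_dvd_pow _ hts) hdvd
    rw [happ, hpeel] at hdvd'
    simp only [Pi.add_apply] at hdvd'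
    rw [hg0, hg1] at hdvd'
    simp only [Pi.smul_apply, smul_eq_mul] at hdvd'
    have : (∑ i ∈ Finset.range m', g (i + 2)) 0
        + ((m' + 1 : ℕ) : ℤ) * (p : ℤ) * A.mulVec v 0 + v 0 - v 0
        = (∑ i ∈ Finset.range m', g (i + 2)) 0
          + ((m' + 1 : ℕ) : ℤ) * (p : ℤ) * A.mulVec v 0 := by ring
    rw [this] at hdvd'
    have := dvd_sub hdvd' htail
    simpa using this
  have hAv0 : A.mulVec v 0 = A 0 0 * (p : ℤ) ^ (s - 1) + A 0 1 * l := by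
    rw [hv]
    simp [Matrix.mulVec, dotProduct, Fin.sum_univ_two]
  rw [hAv0, mul_add] at hmain
  have h2 : (p : ℤ) ^ (t + 2) ∣
      (((m' + 1 : ℕ) : ℤ) * (p : ℤ)) * (A 0 0 * (p : ℤ) ^ (s - 1)) := by
    refine ⟨(p : ℤ) ^ (s - 2) * u * A 0 0, ?_⟩
    have e2 : ((p : ℤ)) ^ (s - 1) = (p : ℤ) * (p : ℤ) ^ (s - 2) := by
      rw [← pow_succ']
      congr 1
      omega
    rw [hmz, e2]
    ring
  have h3 : (p : ℤ) ^ (t + 2) ∣ (((m' + 1 : ℕ) : ℤ) * (p : ℤ)) * (A 0 1 * l) :=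
    (dvd_add_right h2).mp hmain
  have e3 : (((m' + 1 : ℕ) : ℤ) * (p : ℤ)) * (A 0 1 * l)
      = (p : ℤ) ^ (t + 1) * (u * (A 0 1 * l)) := by
    rw [hmz]
    ring
  have h4 : (p : ℤ) ^ (t + 1) * (p : ℤ) ∣ (p : ℤ) ^ (t + 1) * (u * (A 0 1 * l)) := by
    rw [← e3, ← pow_succ]
    exact h3
  have h5 : (p : ℤ) ∣ u * (A 0 1 * l) := by
    have hpne : ((p : ℤ)) ^ (t + 1) ≠ 0 := pow_ne_zero _ (by exact_mod_cast hp.ne_zero)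
    exact (mul_dvd_mul_iff_left hpne).mp h4
  have hprime : Prime (p : ℤ) := Nat.prime_iff_prime_int.mp hp
  rcases hprime.dvd_mul.mp h5 with h | h
  · exact hpu h
  · rcases hprime.dvd_mul.mp h with h | h
    · exact hA h
    · exact hpl h


lemma map_pow_cast (q : ℕ) (M : Matrix (Fin 2) (Fin 2) ℤ) (d : ℕ) :
    (M.map (Int.cast : ℤ → ZMod q)) ^ d = (M ^ d).map (Int.cast : ℤ → ZMod q) := by
  have h : M.map (Int.cast : ℤ → ZMod q) = (Int.castRingHom (ZMod q)).mapMatrix M := rfl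
  rw [h, ← map_pow]
  rfl

lemma map_eq_one_iff' (q : ℕ) (hq : q ≠ 0) (B : Matrix (Fin 2) (Fin 2) ℤ) :
    B.map (Int.cast : ℤ → ZMod q) = 1 ↔ ∀ i j, (q : ℤ) ∣ (B - 1) i j := by
  haveI : NeZero q := ⟨hq⟩
  have hent : ∀ i j : Fin 2, ((B.map (Int.cast : ℤ → ZMod q)) i j
      = (1 : Matrix (Fin 2) (Fin 2) (ZMod q)) i j ↔ (q : ℤ) ∣ (B - 1) i j) := by
    intro i j
    rw [Matrix.map_apply, Matrix.sub_apply, Matrix.one_apply, Matrix.one_apply,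
      ← ZMod.intCast_zmod_eq_zero_iff_dvd]
    rcases eq_or_ne i j with rfl | hij
    · simp only [if_pos rfl]
      push_cast
      rw [sub_eq_zero]
    · simp only [if_neg hij]
      push_cast
      rw [sub_zero]
  constructor
  · intro h i j
    exact (hent i j).mp (by rw [h])
  · intro h
    ext i j
    exact (hent i j).mpr (h i j)

lemma mulVec_map_cast (q : ℕ) (B : Matrix (Fin 2) (Fin 2) ℤ) (v : Fin 2 → ℤ) (a : Fin 2) :
    (B.map (Int.cast : ℤ → ZMod q)).mulVec (fun i => ((v i : ℤ) : ZMod q)) a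
      = ((B.mulVec v a : ℤ) : ZMod q) := by
  simp [Matrix.mulVec, dotProduct, Fin.sum_univ_two, Matrix.map_apply]

theorem orbit_card_eq
    (p : ℕ) (hp : p.Prime) (hp3 : 3 ≤ p) (s : ℕ) (hs : 1 ≤ s)
    (M A : Matrix (Fin 2) (Fin 2) ℤ)
    (hord : IsLeast {k : ℕ | 0 < k ∧ ∀ i j : Fin 2, (p : ℤ) ∣ ((M ^ k - 1) i j)}
      (p ^ 2 - 1))
    (hM : M ^ (p ^ 2 - 1) = (p : ℤ) • A + 1)
    (hA : ¬ (p : ℤ) ∣ A 0 1)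
    (l : ℤ) (hl0 : 0 ≤ l) (hl1 : l < (p : ℤ) ^ s) (hpl : ¬ (p : ℤ) ∣ l) :
    ((Finset.Icc 1 ((p ^ 2 - 1) * p ^ (s - 1))).image
        (fun j : ℕ =>
          ((M.map (Int.cast : ℤ → ZMod (p ^ s))) ^ j).mulVec
            ![(p : ZMod (p ^ s)) ^ (s - 1), (l : ZMod (p ^ s))])).card
      = (p ^ 2 - 1) * p ^ (s - 1) := by
  haveI hfact : Fact p.Prime := ⟨hp⟩
  haveI : NeZero (p ^ s) := ⟨pow_ne_zero s (by omega)⟩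
  set Ms : Matrix (Fin 2) (Fin 2) (ZMod (p ^ s)) := M.map (Int.cast : ℤ → ZMod (p ^ s))
    with hMs
  set vs : Fin 2 → ZMod (p ^ s) := ![(p : ZMod (p ^ s)) ^ (s - 1), (l : ZMod (p ^ s))]
    with hvs
  set n : ℕ := p ^ 2 - 1 with hn'
  set N : ℕ := n * p ^ (s - 1) with hN'
  set v : Fin 2 → ℤ := ![(p : ℤ) ^ (s - 1), l] with hv
  have h1p2 : 1 ≤ p ^ 2 := Nat.one_le_pow 2 p (by omega)
  have hp3' : (3 : ℤ) ≤ (p : ℤ) := by exact_mod_cast hp3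
  have npos : 0 < n := by rw [hn']; zify [h1p2]; nlinarith
  have Npos : 0 < N := Nat.mul_pos npos (pow_pos (by omega) _)
  set Mq : Matrix (Fin 2) (Fin 2) (ZMod p) := M.map (Int.cast : ℤ → ZMod p) with hMq
  have hvsv : vs = fun i => ((v i : ℤ) : ZMod (p ^ s)) := by
    funext a
    fin_cases a
    · show (p : ZMod (p ^ s)) ^ (s - 1) = (((p : ℤ) ^ (s - 1) : ℤ) : ZMod (p ^ s))
      push_cast
      ring
    · show (l : ZMod (p ^ s)) = ((l : ℤ) : ZMod (p ^ s))
      rfl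
  have hMq1 : Mq ^ n = 1 := by
    rw [hMq, map_pow_cast]
    exact (map_eq_one_iff' p hp.ne_zero (M ^ n)).mpr hord.1.2
  have hminq : ∀ k, 0 < k → k < n → Mq ^ k ≠ 1 := by
    intro k hk hlt h1
    rw [hMq, map_pow_cast] at h1
    have hmem := hord.2 ⟨hk, (map_eq_one_iff' p hp.ne_zero (M ^ k)).mp h1⟩
    omega
  -- key: no nontrivial fixed point within the window
  have key : ∀ k, 0 < k → k < N → ¬ ((Ms ^ k).mulVec vs = vs) := by
    intro k hk hkN hfix
    have hcong : ∀ a, (p : ℤ) ^ s ∣ ((M ^ k).mulVec v a - v a) := by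
      intro a
      have h1 := congrFun hfix a
      rw [hvsv, hMs, map_pow_cast, mulVec_map_cast] at h1
      have h2 : (((M ^ k).mulVec v a : ℤ) : ZMod (p ^ s)) = ((v a : ℤ) : ZMod (p ^ s)) := h1
      rw [ZMod.intCast_eq_intCast_iff] at h2
      have h3 := (Int.ModEq.dvd h2.symm)
      have h4 : ((p ^ s : ℕ) : ℤ) = (p : ℤ) ^ s := by push_cast; ring
      rwa [h4] at h3
    have hfixq : (Mq ^ k).mulVec (fun i => ((v i : ℤ) : ZMod p))
        = fun i => ((v i : ℤ) : ZMod p) := by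
      funext a
      rw [hMq, map_pow_cast, mulVec_map_cast]
      have hpd : (p : ℤ) ∣ ((M ^ k).mulVec v a - v a) :=
        dvd_trans (dvd_pow_self (p : ℤ) (by omega)) (hcong a)
      have h5 := (ZMod.intCast_zmod_eq_zero_iff_dvd _ p).mpr hpd
      rw [Int.cast_sub] at h5
      exact sub_eq_zero.mp h5
    have hw : (fun i => ((v i : ℤ) : ZMod p)) ≠ 0 := by
      intro h0
      have h6 := congrFun h0 1
      have h7 : v 1 = l := by rw [hv]; rfl
      rw [h7] at h6
      exact hpl ((ZMod.intCast_zmod_eq_zero_iff_dvd l p).mp h6)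
    obtain ⟨m, rfl⟩ : n ∣ k := fixed_dvd p hp hp3 Mq hMq1 hminq _ hw k hfixq
    have hm0 : 0 < m := by
      rcases Nat.eq_zero_or_pos m with rfl | h
      · simp at hk
      · exact h
    have hmlt : m < p ^ (s - 1) := by
      by_contra hge
      push_neg at hge
      have : N ≤ n * m := Nat.mul_le_mul_left n hge
      omega
    apply lift_contra p hp hp3 s hs A hA l hpl m hm0 hmlt
    have hMk : M ^ (n * m) = ((p : ℤ) • A + 1) ^ m := by
      rw [pow_mul, hn', hM]
    have h8 := hcong 0
    rw [hMk] at h8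
    have h9 : v 0 = (p : ℤ) ^ (s - 1) := by rw [hv]; rfl
    have h10 : (![(p : ℤ) ^ (s - 1), l] : Fin 2 → ℤ) 0 = (p : ℤ) ^ (s - 1) := rfl
    rw [hv, h10] at h8
    exact h8
  -- invertibility of Ms
  have hdet0 : ¬ (p : ℤ) ∣ M.det := by
    intro hdvd
    have h1 : Mq.det = ((M.det : ℤ) : ZMod p) := by
      rw [hMq, show M.map (Int.cast : ℤ → ZMod p)
        = (Int.castRingHom (ZMod p)).mapMatrix M from rfl, ← RingHom.map_det]
      rfl
    have h2 : Mq.det ^ n = 1 := by rw [← Matrix.det_pow, hMq1, Matrix.det_one]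
    rw [h1, (ZMod.intCast_zmod_eq_zero_iff_dvd _ p).mpr hdvd, zero_pow npos.ne'] at h2
    exact zero_ne_one h2
  have hcop : IsCoprime ((p : ℤ) ^ s) M.det :=
    IsCoprime.pow_left (((Nat.prime_iff_prime_int.mp hp).coprime_iff_not_dvd).mpr hdet0)
  obtain ⟨a', b', hab'⟩ := hcop
  have hdetu : IsUnit Ms.det := by
    have h1 : Ms.det = ((M.det : ℤ) : ZMod (p ^ s)) := by
      rw [hMs, show M.map (Int.cast : ℤ → ZMod (p ^ s))
        = (Int.castRingHom (ZMod (p ^ s))).mapMatrix M from rfl, ← RingHom.map_det]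
      rfl
    have hps0 : (((p : ℤ) ^ s : ℤ) : ZMod (p ^ s)) = 0 := by
      have h3 : (((p : ℤ) ^ s : ℤ) : ZMod (p ^ s)) = ((p ^ s : ℕ) : ZMod (p ^ s)) := by
        push_cast; ring
      rw [h3, ZMod.natCast_self]
    have h2 := congrArg (Int.cast : ℤ → ZMod (p ^ s)) hab'
    rw [Int.cast_add, Int.cast_mul, Int.cast_mul, hps0, mul_zero, zero_add, Int.cast_one] at h2
    rw [h1]
    exact IsUnit.of_mul_eq_one _ (by rw [mul_comm]; exact h2)
  obtain ⟨U, hU⟩ := (Matrix.isUnit_iff_isUnit_det Ms).mpr hdetu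
  have cancel : ∀ (x y : Fin 2 → ZMod (p ^ s)) (e : ℕ),
      (Ms ^ e).mulVec x = (Ms ^ e).mulVec y → x = y := by
    intro x y e hxy
    have h1 : ∀ z : Fin 2 → ZMod (p ^ s),
        (((U⁻¹ : _ˣ) ^ e : _ˣ) : Matrix (Fin 2) (Fin 2) (ZMod (p ^ s))).mulVec
          ((Ms ^ e).mulVec z) = z := by
      intro z
      rw [Matrix.mulVec_mulVec, ← hU, ← Units.val_pow_eq_pow_val, ← Units.val_mul,
        inv_pow, inv_mul_cancel, Units.val_one, Matrix.one_mulVec]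
    calc x = _ := (h1 x).symm
      _ = _ := by rw [hxy]
      _ = y := h1 y
  -- injectivity
  have hinj : Set.InjOn (fun j : ℕ => (Ms ^ j).mulVec vs) (Finset.Icc 1 N) := by
    have hmono : ∀ a b, 1 ≤ a → a ≤ N → 1 ≤ b → b ≤ N → a ≤ b →
        (Ms ^ a).mulVec vs = (Ms ^ b).mulVec vs → a = b := by
      intro a b ha1 haN hb1 hbN hle heq
      by_contra hne
      have hba : 0 < b - a := by omega
      apply key (b - a) hba (by omega)
      have hb' : b = a + (b - a) := by omega
      rw [hb', pow_add, ← Matrix.mulVec_mulVec] at heq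
      exact (cancel _ _ a heq).symm
    intro a ha b hb hab
    simp only [Finset.coe_Icc, Set.mem_Icc] at ha hb
    rcases le_total a b with h | h
    · exact hmono a b ha.1 ha.2 hb.1 hb.2 h hab
    · exact (hmono b a hb.1 hb.2 ha.1 ha.2 h hab.symm).symm
  rw [Finset.card_image_of_injOn hinj, Nat.card_Icc]
  omega
end

section
/- Let p ≥ 3 be a prime, η ≥ 1, and M a 2×2 integer matrix with order p²−1 mod p and M^(p²−1) = pA + I where the (1,2)-entry of A is not divisible by p. Then the union over 1 ≤ j ≤ (p²−1)p^(η−1) of M^j applied to the set A_p(η) = (1/p^η){(p^(η−1), l)ᵗ : 0 ≤ l ≤ p^η−1} equals, modulo ℤ², the full punctured grid E̊_{p^η}² = (1/p^η){(l₁,l₂)ᵗ : 0 ≤ l₁,l₂ ≤ p^η−1} \ {0}. -/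
open Matrix Finset Polynomial

namespace OrbitCover

/-- binomial approx: `(1+q*u)^t = 1 + t*q*u + q^2*w`. -/
lemma pow_one_add_sq {R : Type*} [CommRing R] (q u : R) (t : ℕ) :
    ∃ w, (1 + q*u)^t = 1 + (t : R)*q*u + q^2*w := by
  induction t with
  | zero => exact ⟨0, by push_cast; ring⟩
  | succ t ih =>
    obtain ⟨w, hw⟩ := ih
    refine ⟨w + (t:R)*u*u + q*w*u, ?_⟩
    rw [pow_succ, hw]
    push_cast
    ring

/-- `(1 + p^(m+1)*u)^p = 1 + p^(m+2)*u + p^(m+3)*w` for odd prime `p`. -/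
lemma pow_one_add_prime {R : Type*} [CommRing R] {p : ℕ} (hp : p.Prime) (hp3 : 3 ≤ p)
    (m : ℕ) (u : R) :
    ∃ w, (1 + (p:R)^(m+1)*u)^p = 1 + (p:R)^(m+2)*u + (p:R)^(m+3)*w := by
  rcases Nat.eq_zero_or_pos m with hm | hm1
  case inr =>
    -- m ≥ 1 : use the square bound
    obtain ⟨w, hw⟩ := pow_one_add_sq ((p:R)^(m+1)) u p
    refine ⟨(p:R)^(m-1) * w, ?_⟩
    rw [hw]
    have h1 : ((p:ℕ):R) * (p:R)^(m+1) = (p:R)^(m+2) := by ring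
    have h2 : ((p:R)^(m+1))^2 = (p:R)^(m+3) * (p:R)^(m-1) := by
      rw [← pow_add, ← pow_mul]
      congr 1
      omega
    rw [h1, h2]
    ring
  case inl =>
    subst hm
    have hb : ((p:R)*u + 1)^p = ∑ k ∈ range (p+1), ((p:R)*u)^k * 1^(p-k) * (p.choose k : R) :=
      add_pow _ _ _
    have hdvd : ∀ k ∈ range (p-1), (p:R)^3 ∣ ((p:R)*u)^(k+2) * 1^(p-(k+2)) * (p.choose (k+2) : R) := by
      intro k hk
      simp only [mem_range] at hk
      rcases eq_or_lt_of_le (by omega : k + 2 ≤ p) with he | hlt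
      · refine Dvd.dvd.mul_right ?_ _
        refine Dvd.dvd.mul_right ?_ _
        rw [mul_pow]
        exact Dvd.dvd.mul_right (pow_dvd_pow _ (by omega)) _
      · obtain ⟨c, hc⟩ := hp.dvd_choose_self (by omega : k + 2 ≠ 0) hlt
        refine ⟨(p:R)^k * u^(k+2) * 1^(p-(k+2)) * (c:R), ?_⟩
        rw [hc]
        push_cast
        rw [mul_pow]
        ring
    obtain ⟨W, hW⟩ := Finset.dvd_sum hdvd
    refine ⟨W, ?_⟩
    have hsum : ∑ k ∈ range (p+1), ((p:R)*u)^k * 1^(p-k) * (p.choose k : R)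
        = (∑ k ∈ range (p-1), ((p:R)*u)^(k+2) * 1^(p-(k+2)) * (p.choose (k+2) : R))
          + ((p:R)*u)^1 * 1^(p-1) * (p.choose 1 : R)
          + ((p:R)*u)^0 * 1^(p-0) * (p.choose 0 : R) := by
      have e1 : p + 1 = (p - 1) + 1 + 1 := by omega
      rw [e1, Finset.sum_range_succ' _ ((p-1)+1), Finset.sum_range_succ' _ (p-1)]
    have hg : (1 + (p:R)^(0+1)*u)^p = ((p:R)*u + 1)^p := by
      norm_num [add_comm]
    rw [hg, hb, hsum, hW, Nat.choose_one_right, Nat.choose_zero_right]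
    push_cast
    ring

/-- `(1 + p*x)^(p^m) = 1 + p^(m+1)*x + p^(m+2)*y` for odd prime `p`. -/
lemma pow_one_add_pow {R : Type*} [CommRing R] {p : ℕ} (hp : p.Prime) (hp3 : 3 ≤ p)
    (m : ℕ) (x : R) :
    ∃ y, (1 + (p:R)*x)^(p^m) = 1 + (p:R)^(m+1)*x + (p:R)^(m+2)*y := by
  induction m with
  | zero => exact ⟨0, by push_cast; ring⟩
  | succ m ih =>
    obtain ⟨y, hy⟩ := ih
    obtain ⟨w, hw⟩ := pow_one_add_prime hp hp3 m (x + (p:R)*y)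
    refine ⟨y + w, ?_⟩
    rw [pow_succ, pow_mul, hy]
    have : 1 + (p:R)^(m+1)*x + (p:R)^(m+2)*y = 1 + (p:R)^(m+1)*(x + (p:R)*y) := by ring
    rw [this, hw]
    ring


abbrev M2 := Matrix (Fin 2) (Fin 2) ℤ

lemma intCast_mul_eq_smul (c : ℤ) (X : M2) : (c : M2) * X = c • X := by
  rw [← Matrix.diagonal_intCast (n := Fin 2), ← Matrix.smul_eq_diagonal_mul]
  norm_num

lemma natCast_mul_eq_smul (c : ℕ) (X : M2) : (c : M2) * X = (c:ℤ) • X := by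
  rw [← intCast_mul_eq_smul]; norm_cast

/-- matrix version of `pow_one_add_pow`. -/
lemma pow_one_add_pow_mat {p : ℕ} (hp : p.Prime) (hp3 : 3 ≤ p) (m : ℕ) (A : M2) :
    ∃ Y : M2, (1 + (p:ℤ) • A)^(p^m)
      = 1 + ((p:ℤ)^(m+1)) • A + ((p:ℤ)^(m+2)) • Y := by
  obtain ⟨y, hy⟩ := pow_one_add_pow (R := Polynomial ℤ) hp hp3 m X
  refine ⟨aeval A y, ?_⟩
  have h := congrArg (aeval A) hy
  simp only [_root_.map_add, _root_.map_mul, _root_.map_pow, _root_.map_one,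
    map_natCast, aeval_X] at h
  rw [show ((p:M2)) * A = (p:ℤ) • A by simpa using natCast_mul_eq_smul p A] at h
  rw [show ((p:M2))^(m+1) * A = ((p:ℤ)^(m+1)) • A by
    rw [← Nat.cast_pow, natCast_mul_eq_smul]; push_cast; ring_nf] at h
  rw [show ((p:M2))^(m+2) * (aeval A y) = ((p:ℤ)^(m+2)) • (aeval A y) by
    rw [← Nat.cast_pow, natCast_mul_eq_smul]; push_cast; ring_nf] at h
  exact h

/-- matrix version of `pow_one_add_sq` with `q = p^(m+1)`. -/
lemma pow_one_add_sq_mat (p : ℕ) (m t : ℕ) (B : M2) :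
    ∃ W : M2, (1 + ((p:ℤ)^(m+1)) • B)^t
      = 1 + ((t:ℤ) * (p:ℤ)^(m+1)) • B + ((p:ℤ)^(2*(m+1))) • W := by
  obtain ⟨w, hw⟩ := pow_one_add_sq ((p : Polynomial ℤ)^(m+1)) X t
  refine ⟨aeval B w, ?_⟩
  have h := congrArg (aeval B) hw
  simp only [_root_.map_add, _root_.map_mul, _root_.map_pow, _root_.map_one,
    map_natCast, aeval_X] at h
  rw [show ((p:M2))^(m+1) * B = ((p:ℤ)^(m+1)) • B by
    rw [← Nat.cast_pow, natCast_mul_eq_smul]; push_cast; ring_nf] at h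
  have hq : ((p:M2))^(m+1) * B = ((p:ℤ)^(m+1)) • B := by
    rw [← Nat.cast_pow, natCast_mul_eq_smul]; push_cast; ring_nf
  rw [show ((t:M2)) * ((p:M2))^(m+1) * B = ((t:ℤ) * (p:ℤ)^(m+1)) • B by
    rw [mul_assoc, hq, natCast_mul_eq_smul, smul_smul]] at h
  rw [show (((p:M2))^(m+1))^2 * (aeval B w) = ((p:ℤ)^(2*(m+1))) • (aeval B w) by
    rw [← pow_mul, ← Nat.cast_pow, natCast_mul_eq_smul]; push_cast; ring_nf] at h
  exact h


variable {K : Type*} [Field K]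

lemma sq_eq_trace_smul (E : Matrix (Fin 2) (Fin 2) K) (h : E.det = 0) :
    E * E = (E 0 0 + E 1 1) • E := by
  have hd : E 0 0 * E 1 1 - E 0 1 * E 1 0 = 0 := by rw [← Matrix.det_fin_two]; exact h
  ext i j
  fin_cases i <;> fin_cases j <;>
    simp [Matrix.mul_apply, Fin.sum_univ_two] <;>
    first
      | linear_combination (-1 : K) * hd
      | ring
      | linear_combination hd

lemma det_one_add (E : Matrix (Fin 2) (Fin 2) K) :
    (1 + E).det = 1 + (E 0 0 + E 1 1) + E.det := by
  simp [Matrix.det_fin_two, Matrix.add_apply, Matrix.one_apply]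
  ring

lemma pow_one_add_idem (F : Matrix (Fin 2) (Fin 2) K) (hF : F * F = F) (c : K) (n : ℕ) :
    (1 + c • F)^n = 1 + ((1+c)^n - 1) • F := by
  induction n with
  | zero => simp
  | succ n ih =>
    rw [pow_succ, ih]
    have key : ((1+c)^n - 1) • F * (c • F) = (((1+c)^n - 1) * c) • F := by
      rw [smul_mul_assoc, mul_smul_comm, hF, smul_smul]
    have expand : (1 + ((1+c)^n - 1) • F) * (1 + c • F)
        = 1 + (c + ((1+c)^n - 1) + ((1+c)^n - 1) * c) • F := by
      rw [add_mul, mul_add, mul_add, key, add_smul, add_smul]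
      simp only [one_mul, mul_one]
      abel
    rw [expand]
    congr 1
    ring
lemma pow_one_add_nilp (E : Matrix (Fin 2) (Fin 2) K) (hE : E * E = 0) (n : ℕ) :
    (1 + E)^n = 1 + (n : K) • E := by
  induction n with
  | zero => simp
  | succ n ih =>
    rw [pow_succ, ih]
    rw [add_mul, mul_add, mul_add, one_mul, mul_one, smul_mul_assoc, hE]
    push_cast
    rw [add_smul, one_smul, smul_zero, one_mul]
    abel

lemma exists_entry_ne_zero {F : Matrix (Fin 2) (Fin 2) K} (h : F ≠ 0) :
    ∃ i j, F i j ≠ 0 := by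
  by_contra hc
  push_neg at hc
  exact h (by ext i j; exact hc i j)

lemma cross_eq_zero {a b v0 v1 w0 w1 : K} (hab : a ≠ 0 ∨ b ≠ 0)
    (h1 : a * v0 + b * v1 = 0) (h2 : a * w0 + b * w1 = 0) :
    v0 * w1 - v1 * w0 = 0 := by
  rcases hab with ha | hb
  · have : a * (v0 * w1 - v1 * w0) = 0 := by linear_combination w1 * h1 - v1 * h2
    rcases mul_eq_zero.mp this with h | h
    · exact absurd h ha
    · exact h
  · have : b * (v0 * w1 - v1 * w0) = 0 := by linear_combination -(w0 * h1) + v0 * h2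
    rcases mul_eq_zero.mp this with h | h
    · exact absurd h hb
    · exact h

lemma eigen_of_cross {v w : Fin 2 → K} (hv : v ≠ 0)
    (hc : v 0 * w 1 - v 1 * w 0 = 0) : ∃ lam : K, w = lam • v := by
  have hv' : v 0 ≠ 0 ∨ v 1 ≠ 0 := by
    by_contra h
    push_neg at h
    exact hv (by ext i; fin_cases i <;> simp [h.1, h.2])
  rcases hv' with h0 | h1
  · refine ⟨w 0 / v 0, ?_⟩
    ext i
    fin_cases i
    · simp [div_mul_cancel₀ _ h0]
    · show w 1 = w 0 / v 0 * v 1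
      field_simp
      first
        | linear_combination v 0 * hc
        | linear_combination -(v 0 * hc)
        | linear_combination v 1 * hc
        | linear_combination -(v 1 * hc)
        | linear_combination hc
        | linear_combination -hc
  · refine ⟨w 1 / v 1, ?_⟩
    ext i
    fin_cases i
    · show w 0 = w 1 / v 1 * v 0
      field_simp
      first
        | linear_combination v 0 * hc
        | linear_combination -(v 0 * hc)
        | linear_combination v 1 * hc
        | linear_combination -(v 1 * hc)
        | linear_combination hc
        | linear_combination -hc
    · simp [div_mul_cancel₀ _ h1]


section Transitivity

variable {p : ℕ} [Fact p.Prime]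
variable {N : Matrix (Fin 2) (Fin 2) (ZMod p)}

lemma L_pos (h2 : 2 ≤ p) : 0 < p^2 - 1 := by
  have := Nat.pow_le_pow_left h2 2
  norm_num at this
  omega

lemma order_dvd (hone : N^(p^2-1) = 1)
    (hmin : ∀ k, 0 < k → k < p^2-1 → N^k ≠ 1) :
    ∀ t, N^t = 1 → (p^2-1) ∣ t := by
  intro t ht
  have hL : 0 < p^2 - 1 := L_pos (Fact.out : p.Prime).two_le
  have hdiv : t = (p^2-1) * (t / (p^2-1)) + t % (p^2-1) := (Nat.div_add_mod t _).symm
  have hr : N ^ (t % (p^2-1)) = 1 := by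
    have : N ^ t = (N^(p^2-1))^(t / (p^2-1)) * N ^ (t % (p^2-1)) := by
      rw [← pow_mul, ← pow_add, ← hdiv]
    rw [ht, hone, one_pow, one_mul] at this
    exact this.symm
  rcases Nat.eq_zero_or_pos (t % (p^2-1)) with h0 | hpos
  · exact Nat.dvd_of_mod_eq_zero h0
  · exact absurd hr (hmin _ hpos (Nat.mod_lt _ hL))

lemma stab_step (hone : N^(p^2-1) = 1)
    (hmin : ∀ k, 0 < k → k < p^2-1 → N^k ≠ 1)
    (v : Fin 2 → ZMod p) (hv : v ≠ 0) (k : ℕ) (hk0 : 0 < k) (hk1 : k < p^2-1)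
    (hkv : (N^k).mulVec v = v) :
    (N^(p-1)).mulVec v = v ∧ (p^2-1) ∣ k*(p-1) := by
  have hp2 := (Fact.out : p.Prime).two_le
  have hL : 0 < p^2 - 1 := L_pos hp2
  have hNk1 : N^k ≠ 1 := hmin k hk0 hk1
  set P : Matrix (Fin 2) (Fin 2) (ZMod p) := N^k with hP
  set E : Matrix (Fin 2) (Fin 2) (ZMod p) := P - 1 with hE
  have hPE : P = 1 + E := by rw [hE]; abel
  have hE0 : E ≠ 0 := by
    intro h
    exact hNk1 (by rw [hPE, h, add_zero])
  have hEv : E.mulVec v = 0 := by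
    rw [hE, Matrix.sub_mulVec, hkv, Matrix.one_mulVec, sub_self]
  have hdet : E.det = 0 := Matrix.exists_mulVec_eq_zero_iff.mp ⟨v, hv, hEv⟩
  set c : ZMod p := E 0 0 + E 1 1 with hc
  have hE2 : E * E = c • E := sq_eq_trace_smul E hdet
  have hdetN : N.det ≠ 0 := by
    intro h
    have h1 : (N^(p^2-1)).det = 1 := by rw [hone, Matrix.det_one]
    rw [Matrix.det_pow, h, zero_pow (by omega)] at h1
    exact zero_ne_one h1
  by_cases hczero : c = 0
  · -- nilpotent case : contradiction
    exfalso
    have hE2' : E * E = 0 := by rw [hE2, hczero, zero_smul]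
    have hPp : P^p = 1 := by
      rw [hPE, pow_one_add_nilp E hE2' p, ZMod.natCast_self, zero_smul, add_zero]
    have h1 : N^(k*p) = 1 := by rw [pow_mul]; exact hPp
    have hdvd := order_dvd hone hmin _ h1
    have hnd : ¬ p ∣ p^2 - 1 := by
      intro hd
      have h2 : p ∣ p^2 := dvd_pow_self p (by norm_num)
      have h3 : p ∣ p^2 - (p^2 - 1) := Nat.dvd_sub h2 hd
      have h4 : p^2 - (p^2-1) = 1 := by omega
      rw [h4] at h3
      have := Nat.dvd_one.mp h3
      omega
    have hcop : Nat.Coprime (p^2-1) p :=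
      ((Nat.Prime.coprime_iff_not_dvd (Fact.out)).mpr hnd).symm
    have hdk : (p^2-1) ∣ k := hcop.dvd_of_dvd_mul_right hdvd
    have := Nat.le_of_dvd hk0 hdk
    omega
  · -- idempotent case
    set F : Matrix (Fin 2) (Fin 2) (ZMod p) := c⁻¹ • E with hF
    have hFF : F * F = F := by
      rw [hF, smul_mul_assoc, mul_smul_comm, hE2, smul_smul, smul_smul]
      congr 1
      field_simp
    have hcF : c • F = E := by
      rw [hF, smul_smul, mul_inv_cancel₀ hczero, one_smul]
    have hPcF : P = 1 + c • F := by rw [hcF]; exact hPE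
    have hdetP : P.det = 1 + c := by
      have := det_one_add E
      rw [← hPE] at this
      rw [this, hdet, add_zero]
    have h1c : (1 : ZMod p) + c ≠ 0 := by
      rw [← hdetP, hP, Matrix.det_pow]
      exact pow_ne_zero _ hdetN
    have hPp1 : P^(p-1) = 1 := by
      rw [hPcF, pow_one_add_idem F hFF c (p-1), ZMod.pow_card_sub_one_eq_one h1c,
        sub_self, zero_smul, add_zero]
    have hdvd1 : (p^2-1) ∣ k*(p-1) := by
      apply order_dvd hone hmin
      rw [pow_mul]
      exact hPp1
    -- eigenvector part
    have hFne : F ≠ 0 := by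
      intro h
      apply hE0
      rw [← hcF, h, smul_zero]
    have hFv : F.mulVec v = 0 := by
      rw [hF, Matrix.smul_mulVec, hEv, smul_zero]
    have hcomm : F * N = N * F := by
      have hEN : E * N = N * E := by
        rw [hE, sub_mul, mul_sub, one_mul, mul_one]
        congr 1
        rw [hP, ← pow_succ, ← pow_succ']
      rw [hF, smul_mul_assoc, mul_smul_comm, hEN]
    have hFNv : F.mulVec (N.mulVec v) = 0 := by
      rw [Matrix.mulVec_mulVec, hcomm, ← Matrix.mulVec_mulVec, hFv, Matrix.mulVec_zero]
    obtain ⟨i, j, hij⟩ := exists_entry_ne_zero hFne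
    have hab : F i 0 ≠ 0 ∨ F i 1 ≠ 0 := by
      fin_cases j
      · exact Or.inl hij
      · exact Or.inr hij
    have hrow1 : F i 0 * v 0 + F i 1 * v 1 = 0 := by
      have := congrFun hFv i
      simpa [Matrix.mulVec, dotProduct, Fin.sum_univ_two] using this
    have hrow2 : F i 0 * (N.mulVec v) 0 + F i 1 * (N.mulVec v) 1 = 0 := by
      have := congrFun hFNv i
      simpa [Matrix.mulVec, dotProduct, Fin.sum_univ_two] using this
    have hcross := cross_eq_zero hab hrow1 hrow2
    obtain ⟨lam, hlam⟩ := eigen_of_cross hv hcross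
    have hpow : ∀ n : ℕ, (N^n).mulVec v = lam^n • v := by
      intro n
      induction n with
      | zero => simp
      | succ n ih =>
        rw [pow_succ', ← Matrix.mulVec_mulVec, ih, Matrix.mulVec_smul, hlam,
          smul_smul, pow_succ]
    have hvi : ∃ i0, v i0 ≠ 0 := by
      by_contra h
      push_neg at h
      exact hv (by ext i0; simp [h i0])
    obtain ⟨i0, hi0⟩ := hvi
    have hlamL : lam^(p^2-1) = 1 := by
      have h1 : (N^(p^2-1)).mulVec v = v := by rw [hone, Matrix.one_mulVec]
      rw [hpow] at h1
      have := congrFun h1 i0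
      simp only [Pi.smul_apply, smul_eq_mul] at this
      exact mul_right_cancel₀ hi0 (by rw [this, one_mul])
    have hlam0 : lam ≠ 0 := by
      intro h
      rw [h, zero_pow (by omega)] at hlamL
      exact zero_ne_one hlamL
    have hferm : lam^(p-1) = 1 := ZMod.pow_card_sub_one_eq_one hlam0
    refine ⟨?_, hdvd1⟩
    rw [hpow, hferm, one_smul]

lemma fixed_point_free (hp3 : 3 ≤ p) (hone : N^(p^2-1) = 1)
    (hmin : ∀ k, 0 < k → k < p^2-1 → N^k ≠ 1)
    (v : Fin 2 → ZMod p) (hv : v ≠ 0) (k : ℕ) (hk0 : 0 < k) (hk1 : k < p^2-1) :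
    (N^k).mulVec v ≠ v := by
  intro hkv
  obtain ⟨h1, -⟩ := stab_step hone hmin v hv k hk0 hk1 hkv
  have hlt : p - 1 < p^2 - 1 := by
    have := Nat.pow_le_pow_left (le_refl p) 2
    have h4 : p < p^2 := by nlinarith
    omega
  obtain ⟨-, hdvd⟩ := stab_step hone hmin v hv (p-1) (by omega) hlt h1
  -- p^2 - 1 = (p-1)*(p+1)
  obtain ⟨q, rfl⟩ : ∃ q, p = q + 3 := ⟨p - 3, by omega⟩
  have hfact : (q+3)^2 - 1 = ((q+3)-1) * ((q+3)+1) := by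
    have h1 : (q+3)-1 = q+2 := by omega
    rw [h1]
    have h2 : (q+3)^2 = (q+2) * ((q+3)+1) + 1 := by ring
    omega
  rw [hfact] at hdvd
  have hplus : (q+3)+1 ∣ (q+3)-1 :=
    (Nat.mul_dvd_mul_iff_left (show 0 < (q+3)-1 by omega)).mp hdvd
  have := Nat.le_of_dvd (by omega) hplus
  omega

lemma orbit_trans (hp3 : 3 ≤ p) (hone : N^(p^2-1) = 1)
    (hmin : ∀ k, 0 < k → k < p^2-1 → N^k ≠ 1)
    (u t : Fin 2 → ZMod p) (hu : u ≠ 0) (ht : t ≠ 0) :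
    ∃ n : ℕ, (N^n).mulVec u = t := by
  have hp2 := (Fact.out : p.Prime).two_le
  have hL : 0 < p^2 - 1 := L_pos hp2
  have hnz : ∀ k : ℕ, k < p^2-1 → (N^k).mulVec u ≠ 0 := by
    intro k hk h0
    apply hu
    have : ((N^(p^2-1-k)) * (N^k)).mulVec u = u := by
      rw [← pow_add, show p^2-1-k+k = p^2-1 by omega, hone, Matrix.one_mulVec]
    rw [← Matrix.mulVec_mulVec, h0, Matrix.mulVec_zero] at this
    exact this.symm
  let φ : Fin (p^2-1) → {w : Fin 2 → ZMod p // w ≠ 0} :=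
    fun k => ⟨(N^(k:ℕ)).mulVec u, hnz k k.isLt⟩
  have hinj : Function.Injective φ := by
    intro k1 k2 he
    have he' : (N^(k1:ℕ)).mulVec u = (N^(k2:ℕ)).mulVec u := congrArg Subtype.val he
    by_contra hne
    -- wlog k1 < k2
    have key : ∀ a b : Fin (p^2-1), (a:ℕ) < (b:ℕ) →
        (N^(a:ℕ)).mulVec u = (N^(b:ℕ)).mulVec u → False := by
      intro a b hab heq
      have h2 : (N^((p^2-1) - (b:ℕ) + (a:ℕ))).mulVec u = u := by
        rw [pow_add, ← Matrix.mulVec_mulVec, heq, Matrix.mulVec_mulVec, ← pow_add,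
          show (p^2-1) - (b:ℕ) + (b:ℕ) = p^2-1 by omega, hone, Matrix.one_mulVec]
      have hd0 : 0 < (p^2-1) - (b:ℕ) + (a:ℕ) := by omega
      have hd1 : (p^2-1) - (b:ℕ) + (a:ℕ) < p^2-1 := by
        have := b.isLt
        omega
      exact fixed_point_free hp3 hone hmin u hu _ hd0 hd1 h2
    rcases lt_or_gt_of_ne (fun h : (k1:ℕ) = (k2:ℕ) => hne (Fin.ext h)) with h | h
    · exact key k1 k2 h he'
    · exact key k2 k1 h he'.symm
  have hcard : Fintype.card (Fin (p^2-1)) = Fintype.card {w : Fin 2 → ZMod p // w ≠ 0} := by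
    rw [Fintype.card_fin]
    have h1 : Fintype.card {w : Fin 2 → ZMod p // w ≠ 0}
        = Fintype.card (Fin 2 → ZMod p) - Fintype.card {w : Fin 2 → ZMod p // w = 0} := by
      exact Fintype.card_subtype_compl _
    rw [h1, Fintype.card_subtype_eq, Fintype.card_fun, ZMod.card, Fintype.card_fin]
  have hbij : Function.Bijective φ :=
    (Fintype.bijective_iff_injective_and_card φ).mpr ⟨hinj, hcard⟩
  obtain ⟨k, hk⟩ := hbij.2 ⟨t, ht⟩
  exact ⟨(k:ℕ), congrArg Subtype.val hk⟩

end Transitivity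

lemma dvd_pow_sub_one_entries (d : ℤ) (B : M2) (h : ∀ i j, d ∣ (B - 1) i j) (k : ℕ) :
    ∀ i j, d ∣ (B^k - 1) i j := by
  induction k with
  | zero => intro i j; simp
  | succ k ih =>
    have hmat : B^(k+1) - 1 = (B^k - 1)*B + (B - 1) := by
      rw [pow_succ]; noncomm_ring
    intro i j
    rw [hmat, Matrix.add_apply, Matrix.mul_apply]
    exact dvd_add (Finset.dvd_sum fun l _ => (ih i l).mul_right _) (h i j)

lemma padic_step {p : ℕ} (hp : p.Prime) (hp3 : 3 ≤ p) (A : M2) (hA : ¬ (p:ℤ) ∣ A 0 1)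
    (z : Fin 2 → ℤ) (hz0 : (p:ℤ) ∣ z 0) (hz1 : ¬ (p:ℤ) ∣ z 1) :
    ∀ m : ℕ, ∀ c : ℤ, ∃ k : ℕ,
      (((1 + (p:ℤ) • A)^k).mulVec z) 0 ≡ (p:ℤ) * c [ZMOD ((p:ℤ)^(m+1))] := by
  haveI : Fact p.Prime := ⟨hp⟩
  set B : M2 := 1 + (p:ℤ) • A with hB
  have hBsub : B - 1 = (p:ℤ) • A := by rw [hB, add_sub_cancel_left]
  have hBent : ∀ i j, (p:ℤ) ∣ (B - 1) i j := by
    intro i j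
    rw [hBsub, Matrix.smul_apply, smul_eq_mul]
    exact Dvd.intro _ rfl
  intro m
  induction m with
  | zero =>
    intro c
    refine ⟨0, ?_⟩
    rw [pow_zero, Matrix.one_mulVec, pow_one]
    exact (Int.modEq_iff_dvd.mpr (dvd_sub (Dvd.intro c rfl) hz0))
  | succ m ih =>
    intro c
    obtain ⟨k, hk⟩ := ih c
    set z' : Fin 2 → ℤ := (B^k).mulVec z with hz'
    obtain ⟨e, he⟩ : ((p:ℤ)^(m+1)) ∣ (p:ℤ)*c - z' 0 := Int.ModEq.dvd hk
    have hz'sub : ∀ i, (p:ℤ) ∣ z' i - z i := by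
      intro i
      have hent : z' i - z i = ((B^k - 1).mulVec z) i := by
        rw [Matrix.sub_mulVec, Matrix.one_mulVec]
        simp [hz']
      rw [hent, Matrix.mulVec, dotProduct]
      exact Finset.dvd_sum fun l _ => (dvd_pow_sub_one_entries _ _ hBent k i l).mul_right _
    have hz'0 : (p:ℤ) ∣ z' 0 := by
      have h := dvd_add (hz'sub 0) hz0
      simpa using h
    have hz'1 : ¬ (p:ℤ) ∣ z' 1 := by
      intro h
      exact hz1 (by simpa using dvd_sub h (hz'sub 1))
    -- B^(p^m) = 1 + p^(m+1) • Am
    obtain ⟨Y, hY⟩ := pow_one_add_pow_mat hp hp3 m A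
    set Am : M2 := A + (p:ℤ) • Y with hAm
    have hBpm : B^(p^m) = 1 + ((p:ℤ)^(m+1)) • Am := by
      rw [hY, hAm, smul_add, smul_smul,
        show (p:ℤ)^(m+1)*(p:ℤ) = (p:ℤ)^(m+2) by ring, add_assoc]
    set a : ℤ := (Am.mulVec z') 0 with ha
    have hpa : ¬ (p:ℤ) ∣ a := by
      intro h
      have haeq : a = Am 0 0 * z' 0 + Am 0 1 * z' 1 := by
        rw [ha, Matrix.mulVec, dotProduct]
        simp [Fin.sum_univ_two]
      have h1 : (p:ℤ) ∣ Am 0 0 * z' 0 := hz'0.mul_left _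
      have h2 : (p:ℤ) ∣ Am 0 1 * z' 1 := by
        have := dvd_sub h h1
        rw [haeq] at this
        simpa using this
      have hAm01 : Am 0 1 = A 0 1 + (p:ℤ) * Y 0 1 := by
        rw [hAm, Matrix.add_apply, Matrix.smul_apply, smul_eq_mul]
      have hprime : Prime (p:ℤ) := Nat.prime_iff_prime_int.mp hp
      rcases hprime.dvd_mul.mp h2 with h3 | h3
      · rw [hAm01] at h3
        exact hA (by simpa using dvd_sub h3 (Dvd.intro (Y 0 1) rfl))
      · exact hz'1 h3
    -- choose t
    have habar : ((a : ZMod p)) ≠ 0 := by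
      intro h
      exact hpa ((ZMod.intCast_zmod_eq_zero_iff_dvd a p).mp h)
    set t : ℕ := (((e : ℤ) : ZMod p) * ((a : ZMod p))⁻¹).val with ht
    have htz : (p:ℤ) ∣ e - (t:ℤ) * a := by
      have hcast : (((e - (t:ℤ)*a : ℤ)) : ZMod p) = 0 := by
        push_cast
        rw [ht, ZMod.natCast_val, ZMod.cast_id, mul_assoc, inv_mul_cancel₀ habar]
        ring
      exact (ZMod.intCast_zmod_eq_zero_iff_dvd _ p).mp hcast
    obtain ⟨s, hs⟩ := htz
    refine ⟨k + p^m * t, ?_⟩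
    obtain ⟨W, hW⟩ := pow_one_add_sq_mat p m t Am
    have hsplit : B^(k + p^m * t) = (B^(p^m))^t * B^k := by
      rw [pow_add]
      exact (pow_mul_comm B k (p^m*t)).trans (by rw [pow_mul])
    have hval : (B^(k + p^m * t)).mulVec z
        = fun i => z' i + ((t:ℤ) * (p:ℤ)^(m+1)) * (Am.mulVec z') i
            + (p:ℤ)^(2*(m+1)) * ((W.mulVec z') i) := by
      rw [hsplit, ← Matrix.mulVec_mulVec, ← hz', hBpm, hW, Matrix.add_mulVec,
        Matrix.add_mulVec, Matrix.one_mulVec, Matrix.smul_mulVec,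
        Matrix.smul_mulVec]
      ext i
      simp only [Pi.add_apply, Pi.smul_apply, smul_eq_mul]
    have hval0 : ((B^(k + p^m * t)).mulVec z) 0
        = z' 0 + ((t:ℤ) * (p:ℤ)^(m+1)) * a + (p:ℤ)^(2*(m+1)) * ((W.mulVec z') 0) := by
      rw [hval]
    rw [Int.ModEq]
    apply Int.ModEq.symm
    apply Int.modEq_iff_dvd.mpr
    rw [hval0]
    have hdvd2 : ((p:ℤ)^(m+2)) ∣ (p:ℤ)^(2*(m+1)) := pow_dvd_pow _ (by omega)
    obtain ⟨q, hq⟩ := hdvd2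
    have key : (p:ℤ)*c - (z' 0 + ((t:ℤ) * (p:ℤ)^(m+1)) * a + (p:ℤ)^(2*(m+1)) * ((W.mulVec z') 0))
        = (p:ℤ)^(m+1+1) * (s - q * ((W.mulVec z') 0)) := by
      have he' : (p:ℤ)*c - z' 0 = (p:ℤ)^(m+1) * e := he
      rw [hq]
      calc (p:ℤ)*c - (z' 0 + ((t:ℤ) * (p:ℤ)^(m+1)) * a + (p:ℤ)^(m+2)*q * ((W.mulVec z') 0))
          = ((p:ℤ)*c - z' 0) - (p:ℤ)^(m+1) * ((t:ℤ) * a) - (p:ℤ)^(m+2)*q * ((W.mulVec z') 0) := by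
            ring
        _ = (p:ℤ)^(m+1) * (e - (t:ℤ) * a) - (p:ℤ)^(m+2)*q * ((W.mulVec z') 0) := by
            rw [he']; ring
        _ = (p:ℤ)^(m+1+1) * (s - q * ((W.mulVec z') 0)) := by
            rw [hs]; ring
    exact dvd_sub_comm.mp ⟨_, key⟩


lemma map_pow_cast {R : Type*} [CommRing R] (M : M2) (n : ℕ) :
    (M.map (Int.cast : ℤ → R))^n = (M^n).map (Int.cast : ℤ → R) := by
  have h := map_pow ((Int.castRingHom R).mapMatrix) M n
  simp only [RingHom.mapMatrix_apply] at h
  simpa using h.symm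

lemma map_mulVec_cast {R : Type*} [CommRing R] (X : M2) (v : Fin 2 → ℤ) (i : Fin 2) :
    (X.map (Int.cast : ℤ → R)).mulVec (fun j => ((v j : ℤ) : R)) i
      = ((X.mulVec v i : ℤ) : R) := by
  simp only [Matrix.mulVec, dotProduct, Fin.sum_univ_two, Matrix.map_apply]
  push_cast
  ring

/-- translation of the order hypothesis to `ZMod p`. -/
lemma min_translate {p : ℕ} (M : M2)
    (hlow : ∀ k ∈ {k : ℕ | 0 < k ∧ ∀ i j : Fin 2, (p : ℤ) ∣ ((M ^ k - 1) i j)}, p^2 - 1 ≤ k) :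
    ∀ k, 0 < k → k < p^2-1 → (M.map (Int.cast : ℤ → ZMod p))^k ≠ 1 := by
  intro k hk0 hk1 hNk
  rw [map_pow_cast] at hNk
  have hmem : k ∈ {k : ℕ | 0 < k ∧ ∀ i j : Fin 2, (p : ℤ) ∣ ((M ^ k - 1) i j)} := by
    refine ⟨hk0, fun i j => ?_⟩
    have h1 : (((M^k) i j : ℤ) : ZMod p) = (((1:M2) i j : ℤ) : ZMod p) := by
      have h2 := congrFun (congrFun hNk i) j
      rw [Matrix.map_apply] at h2
      rw [h2]
      simp [Matrix.one_apply, apply_ite (Int.cast : ℤ → ZMod p)]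
    have h3 := (ZMod.intCast_eq_intCast_iff _ _ _).mp h1
    have h4 := h3.dvd
    rw [Matrix.sub_apply]
    exact dvd_sub_comm.mp h4
  have := hlow k hmem
  omega

/-- valuation decomposition. -/
lemma val_decomp {p : ℕ} (hp : 2 ≤ p) :
    ∀ η, 1 ≤ η → ∀ w : Fin 2 → ℤ, (¬((p:ℤ)^η ∣ w 0) ∨ ¬((p:ℤ)^η ∣ w 1)) →
      ∃ (s : ℕ) (u : Fin 2 → ℤ), s + 1 ≤ η ∧ w 0 = (p:ℤ)^s * u 0 ∧ w 1 = (p:ℤ)^s * u 1 ∧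
        (¬((p:ℤ) ∣ u 0) ∨ ¬((p:ℤ) ∣ u 1)) := by
  intro η
  induction η with
  | zero => omega
  | succ η ih =>
    intro _ w hw
    by_cases hpw : ¬((p:ℤ) ∣ w 0) ∨ ¬((p:ℤ) ∣ w 1)
    · exact ⟨0, w, by omega, by ring, by ring, hpw⟩
    · push_neg at hpw
      obtain ⟨⟨a, ha⟩, ⟨b, hb⟩⟩ := hpw
      rcases Nat.eq_zero_or_pos η with h0 | hpos
      · subst h0
        exfalso
        rcases hw with h | h
        · exact h (by rw [pow_one, ha]; exact Dvd.intro _ rfl)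
        · exact h (by rw [pow_one, hb]; exact Dvd.intro _ rfl)
      · have hw' : ¬((p:ℤ)^η ∣ a) ∨ ¬((p:ℤ)^η ∣ b) := by
          rcases hw with h | h
          · left; intro hd; exact h (by rw [ha, pow_succ, mul_comm ((p:ℤ)^η) (p:ℤ)]; exact mul_dvd_mul_left _ hd)
          · right; intro hd; exact h (by rw [hb, pow_succ, mul_comm ((p:ℤ)^η) (p:ℤ)]; exact mul_dvd_mul_left _ hd)
        obtain ⟨s, u, hs, h0, h1, hu⟩ := ih hpos (fun i => if i = 0 then a else b) (by simpa using hw')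
        refine ⟨s+1, u, by omega, ?_, ?_, hu⟩
        · simp at h0
          rw [ha, h0, pow_succ]
          ring
        · simp at h1
          rw [hb, h1, pow_succ]
          ring

/-- main reach lemma over ℤ. -/
lemma reach {p : ℕ} (hp : p.Prime) (hp3 : 3 ≤ p) (M A : M2)
    (hM : M^(p^2-1) = (p:ℤ) • A + 1) (hA : ¬ (p:ℤ) ∣ A 0 1)
    (hmin : ∀ k, 0 < k → k < p^2-1 → (M.map (Int.cast : ℤ → ZMod p))^k ≠ 1)
    (u : Fin 2 → ℤ) (hu : ¬((p:ℤ) ∣ u 0) ∨ ¬((p:ℤ) ∣ u 1)) (m : ℕ) :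
    ∃ n : ℕ, ((M^n).mulVec u) 0 ≡ (p:ℤ)^m [ZMOD ((p:ℤ)^(m+1))] := by
  haveI : Fact p.Prime := ⟨hp⟩
  set Nbar := M.map (Int.cast : ℤ → ZMod p) with hNbar
  have hone : Nbar^(p^2-1) = 1 := by
    rw [hNbar, map_pow_cast, hM]
    ext i j
    rw [Matrix.map_apply, Matrix.add_apply, Matrix.smul_apply, smul_eq_mul]
    push_cast
    simp [ZMod.natCast_self, Matrix.one_apply, apply_ite (Int.cast : ℤ → ZMod p)]
  set ubar : Fin 2 → ZMod p := fun i => ((u i : ℤ) : ZMod p) with hubar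
  have hubar0 : ubar ≠ 0 := by
    intro h
    have h0 : ((u 0 : ℤ) : ZMod p) = 0 := congrFun h 0
    have h1 : ((u 1 : ℤ) : ZMod p) = 0 := congrFun h 1
    rcases hu with hc | hc
    · exact hc ((ZMod.intCast_zmod_eq_zero_iff_dvd _ p).mp h0)
    · exact hc ((ZMod.intCast_zmod_eq_zero_iff_dvd _ p).mp h1)
  rcases m with _ | m''
  · -- m = 0
    have ht : (![1, 0] : Fin 2 → ZMod p) ≠ 0 := by
      intro h
      exact one_ne_zero (congrFun h 0)
    obtain ⟨n, hn⟩ := orbit_trans hp3 hone hmin ubar ![1, 0] hubar0 ht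
    refine ⟨n, ?_⟩
    have hcast : (((M^n).mulVec u 0 : ℤ) : ZMod p) = ((1:ℤ) : ZMod p) := by
      rw [← map_mulVec_cast (R := ZMod p) (M^n) u 0, ← map_pow_cast]
      rw [← hNbar, ← hubar]
      rw [hn]
      simp
    have h2 := (ZMod.intCast_eq_intCast_iff _ _ _).mp hcast
    simpa using h2
  · -- m = m'' + 1
    have ht : (![0, 1] : Fin 2 → ZMod p) ≠ 0 := by
      intro h
      exact one_ne_zero (congrFun h 1)
    obtain ⟨i, hi⟩ := orbit_trans hp3 hone hmin ubar ![0, 1] hubar0 ht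
    set z : Fin 2 → ℤ := (M^i).mulVec u with hz
    have hzc : ∀ l : Fin 2, ((z l : ℤ) : ZMod p) = (![0, 1] : Fin 2 → ZMod p) l := by
      intro l
      rw [hz, ← map_mulVec_cast (R := ZMod p) (M^i) u l, ← map_pow_cast, ← hNbar, ← hubar, hi]
    have hz0 : (p:ℤ) ∣ z 0 := by
      have := hzc 0
      simp at this
      exact (ZMod.intCast_zmod_eq_zero_iff_dvd _ p).mp this
    have hz1 : ¬ (p:ℤ) ∣ z 1 := by
      intro hd
      have h1 := hzc 1
      rw [(ZMod.intCast_zmod_eq_zero_iff_dvd (z 1) p).mpr hd] at h1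
      exact one_ne_zero h1.symm
    obtain ⟨k, hk⟩ := padic_step hp hp3 A hA z hz0 hz1 (m''+1) ((p:ℤ)^m'')
    refine ⟨(p^2-1)*k + i, ?_⟩
    have hMn : M^((p^2-1)*k + i) = (1 + (p:ℤ) • A)^k * M^i := by
      rw [pow_add, pow_mul, hM, show (p:ℤ) • A + 1 = 1 + (p:ℤ) • A from add_comm _ _]
    have hvec : (M^((p^2-1)*k + i)).mulVec u = ((1 + (p:ℤ) • A)^k).mulVec z := by
      rw [hMn, ← Matrix.mulVec_mulVec, ← hz]
    rw [hvec]
    have hpow : (p:ℤ)^(m''+1) = (p:ℤ) * (p:ℤ)^m'' := by ring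
    rw [hpow]
    exact hk

end OrbitCover

theorem orbit_union_covers
    (p : ℕ) (hp : p.Prime) (hp3 : 3 ≤ p) (η : ℕ) (hη : 1 ≤ η)
    (M A : Matrix (Fin 2) (Fin 2) ℤ)
    (hord : IsLeast {k : ℕ | 0 < k ∧ ∀ i j : Fin 2, (p : ℤ) ∣ ((M ^ k - 1) i j)}
      (p ^ 2 - 1))
    (hM : M ^ (p ^ 2 - 1) = (p : ℤ) • A + 1)
    (hA : ¬ (p : ℤ) ∣ A 0 1) :
    (⋃ j ∈ Finset.Icc 1 ((p ^ 2 - 1) * p ^ (η - 1)),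
        (fun v : Fin 2 → ZMod (p ^ η) =>
            ((M.map (Int.cast : ℤ → ZMod (p ^ η))) ^ j).mulVec v) ''
          {v : Fin 2 → ZMod (p ^ η) | v 0 = (p : ZMod (p ^ η)) ^ (η - 1)})
      = {v : Fin 2 → ZMod (p ^ η) | v ≠ 0} := by
  haveI hfact : Fact p.Prime := ⟨hp⟩
  haveI : NeZero (p ^ η) := ⟨pow_ne_zero _ hp.pos.ne'⟩
  have hL : 0 < p^2 - 1 := OrbitCover.L_pos hp.two_le
  set T : ℕ := (p^2-1) * p^(η-1) with hT
  have hT0 : 0 < T := Nat.mul_pos hL (Nat.pow_pos hp.pos)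
  set NN : Matrix (Fin 2) (Fin 2) (ZMod (p^η)) :=
    M.map (Int.cast : ℤ → ZMod (p^η)) with hNN
  -- p^(η-1) is nonzero in ZMod (p^η)
  have hpne : ((p : ZMod (p^η)))^(η-1) ≠ 0 := by
    intro h
    rw [← Nat.cast_pow] at h
    have hd := (ZMod.natCast_eq_zero_iff _ _).mp h
    have := (Nat.pow_dvd_pow_iff_le_right hp.one_lt).mp hd
    omega
  -- NN^T = 1
  obtain ⟨Y, hY⟩ := OrbitCover.pow_one_add_pow_mat hp hp3 (η-1) A
  rw [show η-1+1 = η by omega, show η-1+2 = η+1 by omega] at hY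
  have hMT : M^T = 1 + ((p:ℤ)^η) • A + ((p:ℤ)^(η+1)) • Y := by
    rw [hT, pow_mul, hM, show (p:ℤ) • A + 1 = 1 + (p:ℤ) • A from add_comm _ _, hY]
  have hcast0 : ((p : ZMod (p^η)))^η = 0 := by
    rw [← Nat.cast_pow, ZMod.natCast_self]
  have hNT : NN^T = 1 := by
    rw [hNN, OrbitCover.map_pow_cast, hMT]
    ext i j
    rw [Matrix.map_apply, Matrix.add_apply, Matrix.add_apply, Matrix.smul_apply,
      Matrix.smul_apply, smul_eq_mul, smul_eq_mul]
    push_cast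
    rw [hcast0, show ((p : ZMod (p^η)))^(η+1) = 0 by rw [pow_succ, hcast0, zero_mul]]
    simp [Matrix.one_apply, apply_ite (Int.cast : ℤ → ZMod (p^η))]
  ext v
  simp only [Set.mem_iUnion, Set.mem_image, Set.mem_setOf_eq, Finset.mem_Icc]
  constructor
  · rintro ⟨j, ⟨hj1, hj2⟩, x, hx0, rfl⟩
    intro h0
    have hx : x = 0 := by
      have h1 : (NN^(T-j)).mulVec ((NN^j).mulVec x) = x := by
        rw [Matrix.mulVec_mulVec, ← pow_add, show T-j+j = T by omega, hNT,
          Matrix.one_mulVec]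
      rw [h0, Matrix.mulVec_zero] at h1
      exact h1.symm
    apply hpne
    rw [← hx0, hx]
    rfl
  · intro hv
    set w : Fin 2 → ℤ := fun i => ((v i).val : ℤ) with hw
    have hwv : ∀ i, ((w i : ℤ) : ZMod (p^η)) = v i := by
      intro i
      rw [hw]
      push_cast
      rw [ZMod.natCast_val, ZMod.cast_id]
    have hwnd : ¬((p:ℤ)^η ∣ w 0) ∨ ¬((p:ℤ)^η ∣ w 1) := by
      by_contra h
      push_neg at h
      apply hv
      ext i
      have hd : (p:ℤ)^η ∣ w i := by fin_cases i <;> [exact h.1; exact h.2]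
      have : ((w i : ℤ) : ZMod (p^η)) = 0 := by
        apply (ZMod.intCast_zmod_eq_zero_iff_dvd _ _).mpr
        push_cast
        exact hd
      rw [hwv i] at this
      simpa using this
    obtain ⟨s, u, hsη, hu0, hu1, huunit⟩ := OrbitCover.val_decomp hp.two_le η hη w hwnd
    have hmin := OrbitCover.min_translate M hord.2
    obtain ⟨n, hn⟩ := OrbitCover.reach hp hp3 M A hM hA hmin u huunit (η-s-1)
    -- (M^n *ᵥ w) 0 ≡ p^(η-1)  [ZMOD p^η]
    have hwu : w = ((p:ℤ)^s) • u := by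
      ext i
      fin_cases i
      · simpa using hu0
      · simpa using hu1
    have hmod : ((M^n).mulVec w) 0 ≡ (p:ℤ)^(η-1) [ZMOD ((p:ℤ)^η)] := by
      have h1 := hn.mul_left' (c := (p:ℤ)^s)
      rw [show (p:ℤ)^s * (p:ℤ)^(η-s-1) = (p:ℤ)^(η-1) by
            rw [← pow_add]; congr 1; omega,
          show (p:ℤ)^s * (p:ℤ)^(η-s-1+1) = (p:ℤ)^η by
            rw [← pow_add]; congr 1; omega] at h1
      have h2 : ((M^n).mulVec w) 0 = (p:ℤ)^s * ((M^n).mulVec u) 0 := by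
        rw [hwu, Matrix.mulVec_smul]
        simp
      rw [h2]
      exact h1
    set x : Fin 2 → ZMod (p^η) := (NN^n).mulVec v with hx
    have hx0 : x 0 = ((p : ZMod (p^η)))^(η-1) := by
      have hveq : v = fun i => ((w i : ℤ) : ZMod (p^η)) := by
        ext i
        rw [hwv i]
      have h3 : x 0 = (((M^n).mulVec w 0 : ℤ) : ZMod (p^η)) := by
        rw [hx, hveq, hNN, OrbitCover.map_pow_cast, OrbitCover.map_mulVec_cast]
      have hmod' : ((M^n).mulVec w) 0 ≡ (p:ℤ)^(η-1) [ZMOD (((p^η : ℕ) : ℤ))] := by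
        rw [Nat.cast_pow]
        exact hmod
      have h4 : (((M^n).mulVec w 0 : ℤ) : ZMod (p^η))
          = (((p:ℤ)^(η-1) : ℤ) : ZMod (p^η)) :=
        (ZMod.intCast_eq_intCast_iff _ _ _).mpr hmod'
      rw [h3, h4]
      push_cast
      ring
    have hlt : n % T < T := Nat.mod_lt _ hT0
    refine ⟨T - n % T, ⟨by omega, by omega⟩, x, hx0, ?_⟩
    have hmul : (NN^(T - n % T)).mulVec x = (NN^(T - n % T + n)).mulVec v := by
      rw [hx, Matrix.mulVec_mulVec, ← pow_add]
    have hdm := Nat.div_add_mod n T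
    have hexp : T - n % T + n = T * (n / T + 1) := by
      rw [Nat.mul_succ]
      omega
    rw [hmul, hexp, pow_mul, hNT, one_pow, Matrix.one_mulVec]
end

section
/- Let M be a 2×2 integer matrix with det M = L, q ≥ 2 an integer with gcd(L, q) = 1, and λ ∈ E̊_q² a nonzero vector with coordinates in (1/q){0,1,…,q−1}. Then for every j ≥ 1, L^(φ(q)·j)·(M^j λ + ℤ²) ⊆ M^j(λ + ℤ²), where φ is Euler's totient function. -/
theorem scaled_lattice_subset
    (q : ℕ) (hq : 2 ≤ q)
    (M : Matrix (Fin 2) (Fin 2) ℤ) (L : ℤ) (hL : M.det = L)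
    (hgcd : Int.gcd L (q : ℤ) = 1)
    (lam : Fin 2 → ℚ) (hlamne : lam ≠ 0)
    (hlam : ∃ l : Fin 2 → ℤ, (∀ i, 0 ≤ l i ∧ l i ≤ (q : ℤ) - 1) ∧
      lam = fun i => (l i : ℚ) / q) :
    ∀ j : ℕ, 1 ≤ j → ∀ z : Fin 2 → ℤ, ∃ w : Fin 2 → ℤ,
      ((L : ℚ) ^ (Nat.totient q * j)) •
          (((M.map (Int.cast : ℤ → ℚ)) ^ j).mulVec lam + fun i => (z i : ℚ))
        = ((M.map (Int.cast : ℤ → ℚ)) ^ j).mulVec (lam + fun i => (w i : ℚ)) := by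
  obtain ⟨l, hlbound, hlam⟩ := hlam
  intro j hj z
  have hq0 : (q : ℚ) ≠ 0 := by positivity
  set t := Nat.totient q * j with ht
  have hjt : j ≤ t := by
    have : 1 ≤ Nat.totient q := Nat.totient_pos.mpr (by omega)
    calc j = 1 * j := (one_mul j).symm
    _ ≤ Nat.totient q * j := Nat.mul_le_mul_right j this
  -- q divides L^t - 1
  have hcop : IsCoprime L (q : ℤ) := Int.isCoprime_iff_gcd_eq_one.mpr hgcd
  have hunit : IsUnit ((L : ℤ) : ZMod q) := by
    have := hcop.map (Int.castRingHom (ZMod q))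
    simp only [map_intCast, map_natCast, ZMod.natCast_self] at this
    exact (isCoprime_zero_right.mp this)
  have hLt : (((L ^ t - 1 : ℤ)) : ZMod q) = 0 := by
    obtain ⟨u, hu⟩ := hunit
    have h1 : ((L : ℤ) : ZMod q) ^ Nat.totient q = 1 := by
      rw [← hu, ← Units.val_pow_eq_pow_val, ZMod.pow_totient, Units.val_one]
    push_cast
    rw [ht, pow_mul, h1, one_pow, sub_self]
  have hdvd : (q : ℤ) ∣ L ^ t - 1 := (ZMod.intCast_zmod_eq_zero_iff_dvd _ _).mp hLt
  obtain ⟨d, hd⟩ := hdvd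
  -- the integer matrix K with Mq^j * Kq = L^t • 1
  set N : Matrix (Fin 2) (Fin 2) ℤ := M.adjugate with hN
  set K : Matrix (Fin 2) (Fin 2) ℤ := L ^ (t - j) • N ^ j with hK
  set Mq : Matrix (Fin 2) (Fin 2) ℚ := M.map (Int.cast : ℤ → ℚ) with hMq
  have hmapmul : ∀ A B : Matrix (Fin 2) (Fin 2) ℤ,
      (A * B).map (Int.cast : ℤ → ℚ) = A.map Int.cast * B.map Int.cast := fun A B => by
    have := map_mul ((Int.castRingHom ℚ).mapMatrix) A B
    simpa [RingHom.mapMatrix_apply, Int.coe_castRingHom] using this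
  have hsm : ((L • (1 : Matrix (Fin 2) (Fin 2) ℤ)).map (Int.cast : ℤ → ℚ)) = (L : ℚ) • 1 := by
    ext i k
    rw [Matrix.map_apply, Matrix.smul_apply, Matrix.smul_apply, Matrix.one_apply,
      Matrix.one_apply]
    split <;> simp
  have hMN : M * N = L • 1 := by rw [hN, Matrix.mul_adjugate, hL]
  have hNM : N * M = L • 1 := by rw [hN, Matrix.adjugate_mul, hL]
  have hMNq : Mq * N.map (Int.cast : ℤ → ℚ) = (L : ℚ) • 1 := by
    rw [hMq, ← hmapmul, hMN, hsm]
  have hNMq : N.map (Int.cast : ℤ → ℚ) * Mq = (L : ℚ) • 1 := by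
    rw [hMq, ← hmapmul, hNM, hsm]
  have hcomm : Commute Mq (N.map (Int.cast : ℤ → ℚ)) := by
    unfold Commute SemiconjBy
    rw [hMNq, hNMq]
  have hNpow : (N ^ j).map (Int.cast : ℤ → ℚ) = (N.map (Int.cast : ℤ → ℚ)) ^ j := by
    have := map_pow ((Int.castRingHom ℚ).mapMatrix) N j
    simpa [RingHom.mapMatrix_apply, Int.coe_castRingHom] using this
  have hKq : K.map (Int.cast : ℤ → ℚ) = (L : ℚ) ^ (t - j) • (N.map (Int.cast : ℤ → ℚ)) ^ j := by
    rw [hK, ← hNpow]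
    ext i k
    simp only [Matrix.map_apply, Matrix.smul_apply, smul_eq_mul]
    push_cast
    ring
  have hkey : Mq ^ j * K.map (Int.cast : ℤ → ℚ) = ((L : ℚ) ^ t) • 1 := by
    rw [hKq, Matrix.mul_smul, ← hcomm.mul_pow, hMNq, smul_pow, one_pow,
      smul_smul, ← pow_add, Nat.sub_add_cancel hjt]
  -- define w
  refine ⟨fun i => d * l i + (K.mulVec z) i, ?_⟩
  have hlamq : lam = (q : ℚ)⁻¹ • fun i => ((l i : ℚ)) := by
    rw [hlam]; funext i; simp [div_eq_inv_mul]
  -- rewrite the RHS vector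
  have hwc : (fun i => ((d * l i + (K.mulVec z) i : ℤ) : ℚ))
      = (d : ℚ) • (fun i => ((l i : ℚ))) + (K.map (Int.cast : ℤ → ℚ)).mulVec
          (fun i => ((z i : ℚ))) := by
    funext i
    have h2 := RingHom.map_mulVec (Int.castRingHom ℚ) K z i
    simp only [Int.coe_castRingHom, Function.comp_def] at h2
    simp only [Pi.add_apply, Pi.smul_apply, smul_eq_mul]
    push_cast
    rw [h2]
  rw [Matrix.mulVec_add, hwc, Matrix.mulVec_add, Matrix.mulVec_mulVec, hkey,
    Matrix.smul_mulVec, Matrix.one_mulVec, Matrix.mulVec_smul]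
  have hlc : (Mq ^ j).mulVec (fun i => ((l i : ℚ))) = (q : ℚ) • (Mq ^ j).mulVec lam := by
    rw [hlamq, Matrix.mulVec_smul, smul_smul, mul_inv_cancel₀ hq0, one_smul]
  rw [hlc, smul_smul, smul_add]
  have hdq : (d : ℚ) * q = (L : ℚ) ^ t - 1 := by
    have : ((q * d : ℤ) : ℚ) = ((L ^ t - 1 : ℤ) : ℚ) := by rw [← hd]
    push_cast at this
    linarith
  rw [hdq]
  funext i
  simp only [Pi.add_apply, Pi.smul_apply, smul_eq_mul]
  ring
end

section
/- Let p ≥ 3 be a prime and M₀ ∈ GL(2, 𝔽_p) with order p²−1, and write (a lift of) M₀^(p²−1) = pA + I with A ∈ M₂(ℤ). If both off-diagonal entries of A are divisible by p, then for M₁ = M₀ + pI, writing M₁^(p²−1) = pA′ + I, at least one off-diagonal entry of A′ is not divisible by p. -/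
/-- Binomial expansion with a square-zero central element. -/
lemma pow_add_sq_zero {R : Type*} [Ring R] (m ε : R) (hc : ε * m = m * ε)
    (h2 : ε * ε = 0) :
    ∀ n : ℕ, (m + ε) ^ (n + 1) = m ^ (n + 1) + (n + 1) • (ε * m ^ n) := by
  have hcom : ∀ k : ℕ, ε * m ^ k = m ^ k * ε := fun k =>
    (Commute.pow_right (hc : Commute ε m) k).eq
  intro n
  induction n with
  | zero => simp
  | succ n ih =>
      have key : ε * m ^ n * ε = 0 := by
        rw [mul_assoc, ← hcom n, ← mul_assoc, h2, zero_mul]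
      calc (m + ε) ^ (n + 1 + 1) = (m + ε) ^ (n + 1) * (m + ε) := pow_succ _ _
        _ = (m ^ (n + 1) + (n + 1) • (ε * m ^ n)) * (m + ε) := by rw [ih]
        _ = m ^ (n + 1) * m + m ^ (n + 1) * ε + ((n + 1) • (ε * m ^ n) * m
              + (n + 1) • (ε * m ^ n) * ε) := by rw [add_mul, mul_add, mul_add]
        _ = m ^ (n + 1 + 1) + ε * m ^ (n + 1) + (n + 1) • (ε * m ^ (n + 1)) := by
              rw [smul_mul_assoc, smul_mul_assoc, key, smul_zero, add_zero,
                ← pow_succ, mul_assoc, ← pow_succ, hcom]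
        _ = m ^ (n + 1 + 1) + (n + 1 + 1) • (ε * m ^ (n + 1)) := by
              conv_rhs => rw [succ_nsmul]
              rw [add_assoc, add_comm (ε * m ^ (n + 1)) ((n + 1) • (ε * m ^ (n + 1)))]

theorem perturbation_off_diagonal
    (p : ℕ) (hp : p.Prime) (hp3 : 3 ≤ p)
    (M₀ A : Matrix (Fin 2) (Fin 2) ℤ) (hdet : ¬ (p : ℤ) ∣ M₀.det)
    (hord : IsLeast {k : ℕ | 0 < k ∧ ∀ i j : Fin 2, (p : ℤ) ∣ ((M₀ ^ k - 1) i j)}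
      (p ^ 2 - 1))
    (hM : M₀ ^ (p ^ 2 - 1) = (p : ℤ) • A + 1)
    (h01 : (p : ℤ) ∣ A 0 1) (h10 : (p : ℤ) ∣ A 1 0) :
    ∀ A' : Matrix (Fin 2) (Fin 2) ℤ,
      (M₀ + (p : ℤ) • 1) ^ (p ^ 2 - 1) = (p : ℤ) • A' + 1 →
      ¬ (p : ℤ) ∣ A' 0 1 ∨ ¬ (p : ℤ) ∣ A' 1 0 := by
  intro A' hM'
  by_contra hcon
  rw [not_or, not_not, not_not] at hcon
  obtain ⟨h01', h10'⟩ := hcon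
  haveI : Fact p.Prime := ⟨hp⟩
  have hp9 : 9 ≤ p * p := Nat.mul_le_mul hp3 hp3
  have hpsq : p ^ 2 = p * p := sq p
  have hexp : p ^ 2 - 2 + 1 = p ^ 2 - 1 := by omega
  have hpZ : (p : ℤ) ≠ 0 := by exact_mod_cast hp.pos.ne'
  -- Step 1: mod p², show p ∣ off-diagonal entries of M₀ ^ (p²-2)
  have key : ∀ i j : Fin 2, (p : ℤ) ∣ A i j → (p : ℤ) ∣ A' i j →
      (p : ℤ) ∣ (M₀ ^ (p ^ 2 - 2)) i j := by
    intro i j hA hA'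
    set φ : Matrix (Fin 2) (Fin 2) ℤ →+* Matrix (Fin 2) (Fin 2) (ZMod (p ^ 2)) :=
      (Int.castRingHom (ZMod (p ^ 2))).mapMatrix with hφ
    set m : Matrix (Fin 2) (Fin 2) (ZMod (p ^ 2)) := φ M₀ with hm
    set q : ZMod (p ^ 2) := ((p : ℕ) : ZMod (p ^ 2)) with hq
    have hq2 : q * q = 0 := by
      rw [hq, ← Nat.cast_mul, ← hpsq, ZMod.natCast_self]
    set ε : Matrix (Fin 2) (Fin 2) (ZMod (p ^ 2)) := q • 1 with hε
    have hcomm : ε * m = m * ε := by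
      rw [hε, smul_mul_assoc, one_mul, mul_smul_comm, mul_one]
    have hε2 : ε * ε = 0 := by
      rw [hε, smul_mul_assoc, one_mul, smul_smul, hq2, zero_smul]
    have hcastN : ((p ^ 2 - 1 : ℕ) : ZMod (p ^ 2)) = -1 := by
      rw [Nat.cast_sub (by omega), ZMod.natCast_self, Nat.cast_one, zero_sub]
    have hsmul : ∀ (X : Matrix (Fin 2) (Fin 2) ℤ), φ ((p : ℤ) • X) = q • φ X := by
      intro X
      ext a b
      simp only [hφ, RingHom.mapMatrix_apply, Matrix.map_apply, Matrix.smul_apply,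
        Int.coe_castRingHom, hq, smul_eq_mul]
      push_cast
      ring
    -- φ of the perturbed matrix
    have hφpert : φ (M₀ + (p : ℤ) • 1) = m + ε := by
      rw [map_add, ← hm, hsmul, map_one, hε]
    -- expand (m + ε)^(p²-1)
    have hbin : (m + ε) ^ (p ^ 2 - 1) = m ^ (p ^ 2 - 1) - q • m ^ (p ^ 2 - 2) := by
      rw [← hexp, pow_add_sq_zero m ε hcomm hε2 (p ^ 2 - 2)]
      rw [← Nat.cast_smul_eq_nsmul (ZMod (p ^ 2)), hexp, hcastN, neg_one_smul,
        hε, smul_mul_assoc, one_mul]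
      rw [← sub_eq_add_neg]
    -- put everything together mod p²
    have hφM : φ (M₀ ^ (p ^ 2 - 1)) = q • φ A + 1 := by
      rw [hM, map_add, hsmul, map_one]
    have hφM' : q • φ A' + 1 = (m ^ (p ^ 2 - 1)) - q • m ^ (p ^ 2 - 2) := by
      rw [← hbin, ← hφpert, ← map_pow, hM', map_add, hsmul, map_one]
    have hmN : m ^ (p ^ 2 - 1) = q • φ A + 1 := by rw [← hφM, hm, map_pow]
    have h1 : q • φ A' = q • φ A - q • m ^ (p ^ 2 - 2) := by
      have h2 : q • φ A' + 1 = (q • φ A - q • m ^ (p ^ 2 - 2)) + 1 := by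
        rw [hφM', hmN]; abel
      exact add_right_cancel h2
    have heq : q • (φ A' - φ A + m ^ (p ^ 2 - 2)) = 0 := by
      rw [smul_add, smul_sub, h1]; abel
    -- extract entry (i, j)
    have hentry : (q * (((A' i j - A i j + (M₀ ^ (p ^ 2 - 2)) i j : ℤ) : ZMod (p ^ 2)))) = 0 := by
      have := congrArg (fun X => X i j) heq
      simp only [Matrix.smul_apply, Matrix.zero_apply, Matrix.add_apply,
        Matrix.sub_apply] at this
      rw [← this, hm, ← map_pow]
      simp only [hφ, RingHom.mapMatrix_apply, Matrix.map_apply, Int.coe_castRingHom,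
        smul_eq_mul]
      push_cast
      ring
    have hdvd2 : ((p : ℤ) ^ 2) ∣ (p : ℤ) * (A' i j - A i j + (M₀ ^ (p ^ 2 - 2)) i j) := by
      have : (((p : ℤ) * (A' i j - A i j + (M₀ ^ (p ^ 2 - 2)) i j) : ℤ) : ZMod (p ^ 2)) = 0 := by
        push_cast
        rw [← hentry, hq]
        push_cast
        ring
      have h := (ZMod.intCast_zmod_eq_zero_iff_dvd _ (p ^ 2)).mp this
      exact_mod_cast h
    have hdvd1 : (p : ℤ) ∣ (A' i j - A i j + (M₀ ^ (p ^ 2 - 2)) i j) := by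
      rw [sq] at hdvd2
      exact (mul_dvd_mul_iff_left hpZ).mp hdvd2
    have : (p : ℤ) ∣ (M₀ ^ (p ^ 2 - 2)) i j := by
      have := dvd_sub hdvd1 (dvd_sub hA' hA)
      simpa using this
    exact this
  have k01 : (p : ℤ) ∣ (M₀ ^ (p ^ 2 - 2)) 0 1 := key 0 1 h01 h01'
  have k10 : (p : ℤ) ∣ (M₀ ^ (p ^ 2 - 2)) 1 0 := key 1 0 h10 h10'
  -- Step 2: mod p. M₀ is diagonal mod p, hence has order dividing p - 1.
  set ψ : Matrix (Fin 2) (Fin 2) ℤ →+* Matrix (Fin 2) (Fin 2) (ZMod p) :=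
    (Int.castRingHom (ZMod p)).mapMatrix with hψ
  set n : Matrix (Fin 2) (Fin 2) (ZMod p) := ψ M₀ with hn
  set B : Matrix (Fin 2) (Fin 2) (ZMod p) := ψ (M₀ ^ (p ^ 2 - 2)) with hB
  have hψapp : ∀ (X : Matrix (Fin 2) (Fin 2) ℤ) (a b : Fin 2),
      ψ X a b = ((X a b : ℤ) : ZMod p) := by
    intro X a b
    simp [hψ]
  have hB01 : B 0 1 = 0 := by
    rw [hB, hψapp]
    exact (ZMod.intCast_zmod_eq_zero_iff_dvd _ p).mpr k01
  have hB10 : B 1 0 = 0 := by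
    rw [hB, hψapp]
    exact (ZMod.intCast_zmod_eq_zero_iff_dvd _ p).mpr k10
  have hψsmul : ∀ (X : Matrix (Fin 2) (Fin 2) ℤ), ψ ((p : ℤ) • X) = 0 := by
    intro X
    ext a b
    rw [hψapp]
    simp [ZMod.natCast_self]
  have hnB : n * B = 1 := by
    rw [hn, hB, ← map_mul, ← pow_succ', hexp, hM, map_add, hψsmul, map_one, zero_add]
  have hdetn : n.det ≠ 0 := by
    rw [hn, hψ, ← RingHom.map_det]
    simp only [Int.coe_castRingHom]
    rw [Ne, ZMod.intCast_zmod_eq_zero_iff_dvd]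
    exact hdet
  have hdetB : B.det ≠ 0 := by
    intro h
    have : n.det * B.det = 1 := by rw [← Matrix.det_mul, hnB, Matrix.det_one]
    rw [h, mul_zero] at this
    exact zero_ne_one this
  have hB00 : B 0 0 ≠ 0 := by
    intro h
    exact hdetB (by simp [Matrix.det_fin_two, h, hB01])
  have hB11 : B 1 1 ≠ 0 := by
    intro h
    exact hdetB (by simp [Matrix.det_fin_two, h, hB10])
  -- off-diagonal entries of n vanish
  have hn01 : n 0 1 = 0 := by
    have h := congrArg (fun X => X 0 1) hnB
    simp only [Matrix.mul_apply, Fin.sum_univ_two, Matrix.one_apply, hB01,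
      mul_zero, zero_add] at h
    simp only [show ((0 : Fin 2) = 1) = False by simp, if_false] at h
    exact (mul_eq_zero.mp h).resolve_right hB11
  have hn10 : n 1 0 = 0 := by
    have h := congrArg (fun X => X 1 0) hnB
    simp only [Matrix.mul_apply, Fin.sum_univ_two, Matrix.one_apply, hB10,
      mul_zero, add_zero] at h
    simp only [show ((1 : Fin 2) = 0) = False by simp, if_false] at h
    exact (mul_eq_zero.mp h).resolve_right hB00
  have hn00 : n 0 0 ≠ 0 := by
    intro h
    exact hdetn (by simp [Matrix.det_fin_two, h, hn01])
  have hn11 : n 1 1 ≠ 0 := by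
    intro h
    exact hdetn (by simp [Matrix.det_fin_two, h, hn10])
  -- n is diagonal, so n ^ (p - 1) = 1
  have hndiag : n = Matrix.diagonal ![n 0 0, n 1 1] := by
    ext a b
    fin_cases a <;> fin_cases b <;>
      simp [Matrix.diagonal, hn01, hn10]
  have hnp : n ^ (p - 1) = 1 := by
    have hv : (![n 0 0, n 1 1] : Fin 2 → ZMod p) ^ (p - 1) = 1 := by
      funext a
      fin_cases a
      · simpa using ZMod.pow_card_sub_one_eq_one hn00
      · simpa using ZMod.pow_card_sub_one_eq_one hn11
    rw [hndiag, Matrix.diagonal_pow, hv]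
    exact Matrix.diagonal_one
  -- hence p - 1 is in the set, contradicting minimality
  have hmem : (p - 1) ∈ {k : ℕ | 0 < k ∧ ∀ i j : Fin 2, (p : ℤ) ∣ ((M₀ ^ k - 1) i j)} := by
    refine ⟨by omega, fun i j => ?_⟩
    have : ψ (M₀ ^ (p - 1) - 1) = 0 := by
      rw [map_sub, map_pow, map_one, ← hn, hnp, sub_self]
    have h0 := congrArg (fun X => X i j) this
    simp only [Matrix.zero_apply] at h0
    rw [hψapp] at h0
    exact (ZMod.intCast_zmod_eq_zero_iff_dvd _ p).mp h0
  have hle := hord.2 hmem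
  rw [hpsq] at hle
  have hpp : p + 1 ≤ p * p := by nlinarith
  omega
end

section
/- Let α₁, α₂, β₁, β₂ be integers with gcd(α₁,α₂,β₁,β₂) = 1 and α₁β₂ − α₂β₁ ≠ 0, let σ = gcd(α₁,α₂) with 3 ∤ σ, write α₁ = σt₁, α₂ = σt₂ with gcd(t₁,t₂)=1, choose p, q with pt₁ + qt₂ = 1, and set ω = pβ₁ + qβ₂. If 2α₁ − β₁ ∉ 3ℤ or 2α₂ − β₂ ∉ 3ℤ, then 2σ − ω ∉ 3ℤ. -/
theorem prop_3_8_i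
    (α₁ α₂ β₁ β₂ σ t₁ t₂ p q ω : ℤ)
    (hgcd : Int.gcd (Int.gcd α₁ α₂) (Int.gcd β₁ β₂) = 1)
    (hdet : α₁ * β₂ - α₂ * β₁ ≠ 0)
    (hσ : σ = Int.gcd α₁ α₂) (hσ3 : ¬ (3 : ℤ) ∣ σ)
    (ht₁ : α₁ = σ * t₁) (ht₂ : α₂ = σ * t₂)
    (ht : Int.gcd t₁ t₂ = 1)
    (hpq : p * t₁ + q * t₂ = 1)
    (hω : ω = p * β₁ + q * β₂)
    (h3 : (3 : ℤ) ∣ (t₁ * β₂ - t₂ * β₁))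
    (h : ¬ (3 : ℤ) ∣ (2 * α₁ - β₁) ∨ ¬ (3 : ℤ) ∣ (2 * α₂ - β₂)) :
    ¬ (3 : ℤ) ∣ (2 * σ - ω) := by
  intro hd
  rcases h with h | h
  · apply h
    have e : 2 * α₁ - β₁ = t₁ * (2 * σ - ω) + q * (t₁ * β₂ - t₂ * β₁) := by
      subst ht₁ hω; linear_combination β₁ * hpq
    rw [e]
    exact dvd_add (Dvd.dvd.mul_left hd t₁) (Dvd.dvd.mul_left h3 q)
  · apply h
    have e : 2 * α₂ - β₂ = t₂ * (2 * σ - ω) - p * (t₁ * β₂ - t₂ * β₁) := by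
      subst ht₂ hω; linear_combination β₂ * hpq
    rw [e]
    exact dvd_sub (Dvd.dvd.mul_left hd t₂) (Dvd.dvd.mul_left h3 p)
end
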